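/- arXiv:2601.07505 — 10 statements merged into one kernel-verified Lean document; each statement's English description precedes it below -/
import Mathlib

section
/- Let (X,τ,d) be an extended metric-topological space. Let U be the uniformity on X generated by the family of pseudometrics δ_f(x,y) := |f(x)−f(y)|, f ∈ LIP_{b,1}(X,τ,d) (i.e. the infimum over f ∈ LIP_{b,1}(X,τ,d) of the pullbacks along (x,y) ↦ (f(x),f(y)) of the standard uniformity of ℝ). If the uniform space (X,U) is complete, then the extended metric space (X,d) is complete, i.e. every d-Cauchy net in X converges with respect to d. -/
/-!
A `d`-Cauchy net `x` is Cauchy for `U`, since every `f ∈ LIP_{b,1}` is `d`-short and hence maps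
it to a Cauchy net of reals; completeness of `U` gives a limit `l`, so `f (x j) → f l` for all
such `f`. If `d (x i) (x j) < ε` for `i, j ≥ i₀`, letting `j → ∞` gives `|f (x i) - f l| ≤ ε`
for every `f`, and since `d` is recovered from `LIP_{b,1}` this is `d (x i) l ≤ ε`.
-/

open scoped ENNReal Topology

open Filter

universe u v w

/-- An extended pseudodistance on `X`. -/
structure IsExtPseudoDist {X : Type*} (d : X → X → ℝ≥0∞) : Prop where
  refl : ∀ x, d x x = 0
  symm : ∀ x y, d x y = d y x
  triangle : ∀ x y z, d x y ≤ d x z + d z y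

/-- An extended distance on `X`. -/
structure IsExtDist {X : Type*} (d : X → X → ℝ≥0∞) : Prop where
  eq_zero_iff : ∀ x y, d x y = 0 ↔ x = y
  symm : ∀ x y, d x y = d y x
  triangle : ∀ x y z, d x y ≤ d x z + d z y

/-- `LIP_{b,1}(X,τ,d)`: bounded `τ`-continuous functions `f : X → ℝ` with
`|f x - f y| ≤ d x y`. -/
def Lip1 {X : Type*} (τ : TopologicalSpace X) (d : X → X → ℝ≥0∞) : Set (X → ℝ) :=
  {f | @Continuous X ℝ τ _ f ∧ (∃ C : ℝ, ∀ x, |f x| ≤ C) ∧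
    ∀ x y, ENNReal.ofReal |f x - f y| ≤ d x y}

/-- `(X,τ,d)` is an extended metric-topological space. -/
def IsEMT {X : Type*} (τ : TopologicalSpace X) (d : X → X → ℝ≥0∞) : Prop :=
  IsExtDist d ∧
  τ = (⨅ f ∈ Lip1 τ d, TopologicalSpace.induced f inferInstance) ∧
  (∀ x y, d x y = ⨆ f ∈ Lip1 τ d, ENNReal.ofReal |f x - f y|)

/-- A continuous-short map between (pre-)extended (pseudo)metric-topological spaces. -/
def ContinuousShort {X Y : Type*} (τX : TopologicalSpace X) (dX : X → X → ℝ≥0∞)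
    (τY : TopologicalSpace Y) (dY : Y → Y → ℝ≥0∞) (φ : X → Y) : Prop :=
  @Continuous X Y τX τY φ ∧ ∀ x y, dY (φ x) (φ y) ≤ dX x y

section Nets

variable {I : Type*} [Preorder I]

theorem exists_forall_lt_of_iInf_iSup₂_eq_zero {D : I → I → ℝ≥0∞}
    (hD : ⨅ i₀ : I, ⨆ (i : I) (_ : i₀ ≤ i) (j : I) (_ : i₀ ≤ j), D i j = 0)
    {ε : ℝ≥0∞} (hε : 0 < ε) : ∃ i₀, ∀ i j, i₀ ≤ i → i₀ ≤ j → D i j < ε := by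
  obtain ⟨i₀, hi₀⟩ := iInf_lt_iff.mp (hD ▸ hε)
  exact ⟨i₀, fun i j hi hj =>
    (le_iSup₂_of_le i hi (le_iSup₂ (f := fun j _ => D i j) j hj)).trans_lt hi₀⟩

theorem iInf_iSup_eq_zero_of_forall_exists_le {g : I → ℝ≥0∞}
    (hg : ∀ ε : ℝ≥0∞, 0 < ε → ∃ i₀, ∀ i, i₀ ≤ i → g i ≤ ε) :
    ⨅ i₀ : I, ⨆ (i : I) (_ : i₀ ≤ i), g i = 0 := by
  refine le_antisymm (le_of_forall_gt_imp_ge_of_dense fun ε hε => ?_) bot_le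
  obtain ⟨i₀, hi₀⟩ := hg ε hε
  exact iInf_le_of_le i₀ (iSup₂_le hi₀)

end Nets

section LipUniformity

variable {X : Type*} {τ : TopologicalSpace X} {d : X → X → ℝ≥0∞}

theorem edist_le_of_mem_lip1 {f : X → ℝ} (hf : f ∈ Lip1 τ d) (a b : X) :
    edist (f a) (f b) ≤ d a b := by
  rw [edist_dist, Real.dist_eq]
  exact hf.2.2 a b

theorem cauchySeq_comp_of_edist_le {α I : Type*} [PseudoEMetricSpace α] [Preorder I]
    [Nonempty I] [IsDirectedOrder I] {f : X → α} (hf : ∀ a b, edist (f a) (f b) ≤ d a b)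
    {x : I → X} (hx : ∀ ε : ℝ≥0∞, 0 < ε → ∃ i₀, ∀ i j, i₀ ≤ i → i₀ ≤ j → d (x i) (x j) < ε) :
    CauchySeq (f ∘ x) := by
  refine uniformity_basis_edist.cauchy_iff.mpr ⟨map_neBot, fun ε hε => ?_⟩
  obtain ⟨i₀, hi₀⟩ := hx ε hε
  refine ⟨f ∘ x '' Set.Ici i₀, image_mem_map (Ici_mem_atTop i₀), ?_⟩
  rintro _ ⟨i, hi, rfl⟩ _ ⟨j, hj, rfl⟩
  exact (hf _ _).trans_lt (hi₀ i j hi hj)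

variable (τ d) in
abbrev lipUniformSpace : UniformSpace X :=
  ⨅ f ∈ Lip1 τ d, UniformSpace.comap f inferInstance

theorem uniformContinuous_lipUniformSpace {f : X → ℝ} (hf : f ∈ Lip1 τ d) :
    @UniformContinuous X ℝ (lipUniformSpace τ d) _ f :=
  uniformContinuous_iInf_dom (uniformContinuous_iInf_dom (i := hf) uniformContinuous_comap)

theorem cauchy_lipUniformSpace_iff {l : Filter X} [l.NeBot] :
    Cauchy (uniformSpace := lipUniformSpace τ d) l ↔ ∀ f ∈ Lip1 τ d, Cauchy (map f l) := by
  rw [lipUniformSpace, cauchy_iInf_uniformSpace']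
  refine forall_congr' fun f => ?_
  rw [cauchy_iInf_uniformSpace']
  exact forall_congr' fun _ => cauchy_comap_uniformSpace

theorem Filter.Tendsto.apply_of_mem_lip1 {ι : Type*} {F : Filter ι} {x : ι → X} {l : X}
    (hl : Tendsto x F (@nhds X (lipUniformSpace τ d).toTopologicalSpace l)) {f : X → ℝ}
    (hf : f ∈ Lip1 τ d) : Tendsto (fun i => f (x i)) F (𝓝 (f l)) :=
  (@Continuous.tendsto X ℝ (lipUniformSpace τ d).toTopologicalSpace _ f
    (@UniformContinuous.continuous X ℝ (lipUniformSpace τ d) _ f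
      (uniformContinuous_lipUniformSpace hf)) l).comp hl

theorem le_of_tendsto_lipUniformSpace
    (hrec : ∀ a b, d a b ≤ ⨆ f ∈ Lip1 τ d, ENNReal.ofReal |f a - f b|)
    {I : Type*} [Preorder I] [Nonempty I] [IsDirectedOrder I] {x : I → X} {l : X}
    (hl : Tendsto x atTop (@nhds X (lipUniformSpace τ d).toTopologicalSpace l))
    {ε : ℝ≥0∞} {i₀ : I} (hi₀ : ∀ i j, i₀ ≤ i → i₀ ≤ j → d (x i) (x j) < ε)
    {i : I} (hi : i₀ ≤ i) : d (x i) l ≤ ε := by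
  refine (hrec _ _).trans (iSup₂_le fun f hf => ?_)
  have hdist : Tendsto (fun j => ENNReal.ofReal |f (x i) - f (x j)|) atTop
      (𝓝 (ENNReal.ofReal |f (x i) - f l|)) :=
    (ENNReal.continuous_ofReal.tendsto _).comp
      (tendsto_const_nhds.sub (hl.apply_of_mem_lip1 hf)).abs
  refine le_of_tendsto hdist ?_
  filter_upwards [Ici_mem_atTop i₀] with j hj
  exact (hf.2.2 _ _).trans (hi₀ i j hi hj).le

end LipUniformity

/-- Let `(X,τ,d)` be an e.m.t. space, and let `U` be the uniformity generated by the
pseudometrics `δ_f(x,y) = |f x - f y|`, `f ∈ LIP_{b,1}(X,τ,d)` (the infimum over `f` of the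
pullbacks of the standard uniformity of `ℝ`). If `(X,U)` is a complete uniform space, then
`(X,d)` is metrically complete: every `d`-Cauchy net converges with respect to `d`. -/
theorem dComplete_of_uniformComplete {X : Type u} (τ : TopologicalSpace X)
    (d : X → X → ℝ≥0∞) (h : IsEMT τ d)
    (hcomp : @CompleteSpace X (⨅ f ∈ Lip1 τ d, UniformSpace.comap f inferInstance)) :
    ∀ (I : Type v) [Nonempty I] [Preorder I] [IsDirected I (· ≤ ·)] (x : I → X),
      (⨅ i₀ : I, ⨆ (i : I) (_ : i₀ ≤ i) (j : I) (_ : i₀ ≤ j), d (x i) (x j)) = 0 →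
      ∃ l : X, (⨅ i₀ : I, ⨆ (i : I) (_ : i₀ ≤ i), d (x i) l) = 0 := by
  intro I _ _ _ x hC
  let _ := lipUniformSpace τ d
  have : CompleteSpace X := hcomp
  have hsmall : ∀ ε : ℝ≥0∞, 0 < ε → ∃ i₀, ∀ i j, i₀ ≤ i → i₀ ≤ j → d (x i) (x j) < ε :=
    fun ε hε => exists_forall_lt_of_iInf_iSup₂_eq_zero hC hε
  have hcauchy : Cauchy (map x atTop) := cauchy_lipUniformSpace_iff.mpr fun f hf =>
    cauchySeq_comp_of_edist_le (edist_le_of_mem_lip1 hf) hsmall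
  obtain ⟨l, hl⟩ := CompleteSpace.complete hcauchy
  refine ⟨l, iInf_iSup_eq_zero_of_forall_exists_le fun ε hε => ?_⟩
  obtain ⟨i₀, hi₀⟩ := hsmall ε hε
  exact ⟨i₀, fun i hi =>
    le_of_tendsto_lipUniformSpace (fun a b => (h.2.2 a b).le) hl hi₀ hi⟩
end

section
/- Let (X,τ,d) be an extended metric-topological space and let E ⊆ X be any subset. Then (E, τ⌞E, d|_{E×E}) is an extended metric-topological space, where τ⌞E = {U ∩ E : U ∈ τ} is the relative topology and d|_{E×E} is the restriction of d. -/
open scoped ENNReal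

universe u v w

/-- Every subset of an extended metric-topological space, equipped with the relative topology
and the restricted distance, is an extended metric-topological space. -/
theorem isEMT_subspace {X : Type u} (τ : TopologicalSpace X) (d : X → X → ℝ≥0∞)
    (h : IsEMT τ d) (E : Set X) :
    IsEMT (TopologicalSpace.induced (Subtype.val : E → X) τ)
      (fun a b : E => d a b) := by
  obtain ⟨hd, htop, hrec⟩ := h
  set τE := TopologicalSpace.induced (Subtype.val : E → X) τ with hτE
  have key : ∀ f ∈ Lip1 τ d, (f ∘ Subtype.val) ∈ Lip1 τE (fun a b : E => d a b) := by
    rintro f ⟨hc, ⟨C, hC⟩, hl⟩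
    exact ⟨hc.comp continuous_induced_dom, ⟨C, fun x => hC x⟩, fun x y => hl x y⟩
  refine ⟨⟨fun x y => ?_, fun x y => hd.symm x y, fun x y z => hd.triangle x y z⟩, ?_, ?_⟩
  · rw [hd.eq_zero_iff]
    exact ⟨fun h => Subtype.ext h, fun h => congrArg _ h⟩
  · apply le_antisymm
    · exact le_iInf fun g => le_iInf fun hg => continuous_iff_le_induced.mp hg.1
    · have : τE = ⨅ f ∈ Lip1 τ d, TopologicalSpace.induced (f ∘ Subtype.val)
          inferInstance := by
        conv_lhs => rw [hτE, htop]
        simp only [induced_iInf, induced_compose]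
      exact le_trans
        (le_iInf fun f => le_iInf fun hf => iInf₂_le (f ∘ Subtype.val) (key f hf))
        this.ge
  · intro x y
    apply le_antisymm
    · rw [show (fun a b : E => d a b) x y = d x y from rfl, hrec x y]
      exact iSup₂_le fun f hf =>
        le_iSup₂_of_le (f ∘ Subtype.val) (key f hf) le_rfl
    · exact iSup₂_le fun g hg => hg.2.2 x y
end

section
/- Let (X,τ,d) be a pre-e.pm.t. space. Then there exist an extended metric-topological space (X̌,τ̌,ď) and a surjective continuous-short map c : (X,τ,d) → (X̌,τ̌,ď) with the following universal property: for every extended metric-topological space (Y,τ_Y,d_Y) and every continuous-short map φ : (X,τ,d) → (Y,τ_Y,d_Y) there exists a unique continuous-short map φ̃ : (X̌,τ̌,ď) → (Y,τ_Y,d_Y) with φ̃ ∘ c = φ. Moreover, for every extended metric-topological space (Y,τ_Y,d_Y), the assignment φ ↦ φ̃ is a bijection from the set of continuous-short maps (X,τ,d) → (Y,τ_Y,d_Y) onto the set of continuous-short maps (X̌,τ̌,ď) → (Y,τ_Y,d_Y). -/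
open scoped ENNReal

universe u v w

/-!
`X̌` is the quotient of `X` identifying the points that no function of `LIP_{b,1}(X,τ,d)`
separates; `τ̌` is the initial topology of the functions on `X̌` whose pullback lies in
`LIP_{b,1}(X,τ,d)`, and `ď` is the supremum of `|f x - f y|` over `LIP_{b,1}(X,τ,d)`. These
functions are then exactly `LIP_{b,1}(X̌,τ̌,ď)`, which makes `X̌` an e.m.t. space. A
continuous-short map into an e.m.t. space pulls `LIP_{b,1}` back into `LIP_{b,1}`, so it is
constant on the classes and descends to `X̌`; uniqueness holds because `X → X̌` is onto.
-/

open TopologicalSpace Topology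

section Lip1

variable {X Y : Type*} {τ : TopologicalSpace X} {d : X → X → ℝ≥0∞}
  {τY : TopologicalSpace Y} {dY : Y → Y → ℝ≥0∞}

/-- The third clause of `IsEMT τ d` says `d = lipDist τ d`. -/
noncomputable def lipDist (τ : TopologicalSpace X) (d : X → X → ℝ≥0∞) (x y : X) : ℝ≥0∞ :=
  ⨆ f ∈ Lip1 τ d, ENNReal.ofReal |f x - f y|

lemma le_lipDist {f : X → ℝ} (hf : f ∈ Lip1 τ d) (x y : X) :
    ENNReal.ofReal |f x - f y| ≤ lipDist τ d x y :=
  le_iSup₂_of_le f hf le_rfl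

lemma lipDist_le (x y : X) : lipDist τ d x y ≤ d x y :=
  iSup₂_le fun _ hf => hf.2.2 x y

lemma lipDist_eq_zero_iff {x y : X} : lipDist τ d x y = 0 ↔ ∀ f ∈ Lip1 τ d, f x = f y := by
  simp only [lipDist, ENNReal.iSup_eq_zero, ENNReal.ofReal_eq_zero, abs_nonpos_iff, sub_eq_zero]

lemma isExtPseudoDist_lipDist : IsExtPseudoDist (lipDist τ d) where
  refl x := by simp [lipDist]
  symm x y := iSup_congr fun f => iSup_congr fun _ => by rw [abs_sub_comm]
  triangle x y z := iSup₂_le fun f hf =>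
    calc ENNReal.ofReal |f x - f y|
        ≤ ENNReal.ofReal (|f x - f z| + |f z - f y|) :=
          ENNReal.ofReal_le_ofReal (abs_sub_le _ _ _)
      _ ≤ ENNReal.ofReal |f x - f z| + ENNReal.ofReal |f z - f y| := ENNReal.ofReal_add_le
      _ ≤ lipDist τ d x z + lipDist τ d z y := add_le_add (le_lipDist hf x z) (le_lipDist hf z y)

lemma ContinuousShort.comp {Z : Type*} {τZ : TopologicalSpace Z} {dZ : Z → Z → ℝ≥0∞}
    {ψ : Y → Z} {φ : X → Y} (hψ : ContinuousShort τY dY τZ dZ ψ)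
    (hφ : ContinuousShort τ d τY dY φ) : ContinuousShort τ d τZ dZ (ψ ∘ φ) :=
  ⟨@Continuous.comp X Y Z τ τY τZ φ ψ hψ.1 hφ.1, fun x y => (hψ.2 _ _).trans (hφ.2 x y)⟩

lemma comp_mem_lip1 {φ : X → Y} (hφ : ContinuousShort τ d τY dY φ) {h : Y → ℝ}
    (hh : h ∈ Lip1 τY dY) : h ∘ φ ∈ Lip1 τ d := by
  obtain ⟨hc, ⟨C, hC⟩, hl⟩ := hh
  exact ⟨@Continuous.comp X Y ℝ τ τY _ φ h hc hφ.1, ⟨C, fun x => hC _⟩,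
    fun x y => (hl (φ x) (φ y)).trans (hφ.2 x y)⟩

lemma ContinuousShort.lipDist_le {φ : X → Y} (hφ : ContinuousShort τ d τY dY φ) (x y : X) :
    lipDist τY dY (φ x) (φ y) ≤ lipDist τ d x y :=
  iSup₂_le fun _ hh => le_lipDist (comp_mem_lip1 hφ hh) x y

lemma IsEMT.continuous_of_forall_comp {Z : Type*} {τZ : TopologicalSpace Z}
    (hY : IsEMT τY dY) {ψ : Z → Y} (h : ∀ g ∈ Lip1 τY dY, Continuous[τZ, _] (g ∘ ψ)) :
    Continuous[τZ, τY] ψ := by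
  rw [hY.2.1]
  exact continuous_iInf_rng.2 fun g => continuous_iInf_rng.2 fun hg =>
    continuous_induced_rng.2 (h g hg)

end Lip1

def lipSetoid {X : Type*} (τ : TopologicalSpace X) (d : X → X → ℝ≥0∞) : Setoid X where
  r x y := ∀ f ∈ Lip1 τ d, f x = f y
  iseqv := ⟨fun _ _ _ => rfl, fun h f hf => (h f hf).symm,
    fun h₁ h₂ f hf => (h₁ f hf).trans (h₂ f hf)⟩

abbrev EMTification {X : Type*} (τ : TopologicalSpace X) (d : X → X → ℝ≥0∞) :=
  Quotient (lipSetoid τ d)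

namespace EMTification

variable {X Y : Type*} {τ : TopologicalSpace X} {d : X → X → ℝ≥0∞}
  {τY : TopologicalSpace Y} {dY : Y → Y → ℝ≥0∞}

def mk (τ : TopologicalSpace X) (d : X → X → ℝ≥0∞) : X → EMTification τ d := Quotient.mk _

lemma mk_surjective : Function.Surjective (mk τ d) := Quotient.exists_rep

noncomputable def dist (τ : TopologicalSpace X) (d : X → X → ℝ≥0∞) :
    EMTification τ d → EMTification τ d → ℝ≥0∞ :=
  Quotient.lift₂ (lipDist τ d) fun _ _ _ _ ha hb =>
    iSup_congr fun f => iSup_congr fun hf => by rw [ha f hf, hb f hf]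

lemma dist_mk (x y : X) : dist τ d (mk τ d x) (mk τ d y) = lipDist τ d x y := rfl

abbrev topology (τ : TopologicalSpace X) (d : X → X → ℝ≥0∞) :
    TopologicalSpace (EMTification τ d) :=
  ⨅ g ∈ {g : EMTification τ d → ℝ | g ∘ mk τ d ∈ Lip1 τ d}, induced g inferInstance

lemma continuousShort_mk : ContinuousShort τ d (topology τ d) (dist τ d) (mk τ d) :=
  ⟨continuous_iInf_rng.2 fun _ => continuous_iInf_rng.2 fun hg =>
      continuous_induced_rng.2 hg.1,
    fun x y => lipDist_le x y⟩

lemma mem_lip1_iff {g : EMTification τ d → ℝ} :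
    g ∈ Lip1 (topology τ d) (dist τ d) ↔ g ∘ mk τ d ∈ Lip1 τ d := by
  refine ⟨fun hg => comp_mem_lip1 continuousShort_mk hg, fun hg => ?_⟩
  obtain ⟨C, hC⟩ := hg.2.1
  exact ⟨continuous_iff_le_induced.2 (iInf₂_le g hg), ⟨C, mk_surjective.forall.2 hC⟩,
    mk_surjective.forall₂.2 (le_lipDist hg)⟩

lemma lip1_eq : Lip1 (topology τ d) (dist τ d) = {g | g ∘ mk τ d ∈ Lip1 τ d} :=
  Set.ext fun _ => mem_lip1_iff

lemma lift_mem_lip1 {f : X → ℝ} (hf : f ∈ Lip1 τ d) :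
    Quotient.lift f (fun a b (h : ∀ g ∈ Lip1 τ d, g a = g b) => h f hf) ∈
      Lip1 (topology τ d) (dist τ d) :=
  mem_lip1_iff.2 hf

lemma lipDist_eq_dist : lipDist (topology τ d) (dist τ d) = dist τ d := by
  ext z w
  obtain ⟨x, rfl⟩ := mk_surjective z
  obtain ⟨y, rfl⟩ := mk_surjective w
  refine le_antisymm (iSup₂_le fun g hg => le_lipDist (mem_lip1_iff.1 hg) x y)
    (iSup₂_le fun f hf => le_lipDist (lift_mem_lip1 hf) (mk τ d x) (mk τ d y))

lemma isExtDist_dist : IsExtDist (dist τ d) := by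
  obtain ⟨-, symm, triangle⟩ := isExtPseudoDist_lipDist (τ := topology τ d) (d := dist τ d)
  rw [lipDist_eq_dist] at symm triangle
  refine ⟨mk_surjective.forall₂.2 fun x y => ?_, symm, triangle⟩
  rw [dist_mk, lipDist_eq_zero_iff, mk, Quotient.eq]
  rfl

lemma isEMT : IsEMT (topology τ d) (dist τ d) := by
  refine ⟨isExtDist_dist, ?_, fun z w => (congrFun₂ lipDist_eq_dist z w).symm⟩
  rw [lip1_eq]

lemma exists_continuousShort_comp_eq (hY : IsEMT τY dY) {φ : X → Y}
    (hφ : ContinuousShort τ d τY dY φ) :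
    ∃ ψ : EMTification τ d → Y,
      ContinuousShort (topology τ d) (dist τ d) τY dY ψ ∧ ψ ∘ mk τ d = φ := by
  have hdY : ∀ y y', dY y y' = lipDist τY dY y y' := hY.2.2
  have resp (a b : X) (hab : ∀ f ∈ Lip1 τ d, f a = f b) : φ a = φ b := by
    refine (hY.1.eq_zero_iff _ _).1 (le_antisymm ?_ zero_le)
    rw [hdY, ← lipDist_eq_zero_iff.2 hab]
    exact hφ.lipDist_le a b
  refine ⟨Quotient.lift φ resp, ⟨?_, mk_surjective.forall₂.2 fun x y => ?_⟩, rfl⟩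
  · exact hY.continuous_of_forall_comp fun h hh => (mem_lip1_iff.2 (comp_mem_lip1 hφ hh)).1
  · exact (hdY (φ x) (φ y)).trans_le (hφ.lipDist_le x y)

end EMTification

theorem emt_fication_general {X : Type u} (τ : TopologicalSpace X) (d : X → X → ℝ≥0∞) :
    ∃ (Z : Type u) (τZ : TopologicalSpace Z) (dZ : Z → Z → ℝ≥0∞) (c : X → Z),
      IsEMT τZ dZ ∧ Function.Surjective c ∧ ContinuousShort τ d τZ dZ c ∧
      (∀ (Y : Type v) (τY : TopologicalSpace Y) (dY : Y → Y → ℝ≥0∞), IsEMT τY dY →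
        (∀ φ : X → Y, ContinuousShort τ d τY dY φ →
          ∃! ψ : Z → Y, ContinuousShort τZ dZ τY dY ψ ∧ ψ ∘ c = φ) ∧
        Set.BijOn (fun ψ : Z → Y => ψ ∘ c)
          {ψ | ContinuousShort τZ dZ τY dY ψ} {φ | ContinuousShort τ d τY dY φ}) := by
  refine ⟨EMTification τ d, EMTification.topology τ d, EMTification.dist τ d,
    EMTification.mk τ d, EMTification.isEMT, EMTification.mk_surjective,
    EMTification.continuousShort_mk, fun Y τY dY hY => ?_⟩
  have comp_mk_injective :
      Function.Injective fun ψ : EMTification τ d → Y => ψ ∘ EMTification.mk τ d :=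
    EMTification.mk_surjective.injective_comp_right
  refine ⟨fun φ hφ => ?_, ⟨fun ψ hψ => hψ.comp EMTification.continuousShort_mk,
    comp_mk_injective.injOn, fun φ hφ => EMTification.exists_continuousShort_comp_eq hY hφ⟩⟩
  obtain ⟨ψ, hψ, rfl⟩ := EMTification.exists_continuousShort_comp_eq hY hφ
  exact ⟨ψ, ⟨hψ, rfl⟩, fun ψ' h => comp_mk_injective h.2⟩

/-- **The e.m.t.-fication.** For every pre-e.pm.t. space `(X,τ,d)` there exist an e.m.t.
space `(X̌,τ̌,ď)` and a surjective continuous-short map `c : (X,τ,d) → (X̌,τ̌,ď)` such that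
every continuous-short map from `(X,τ,d)` into an e.m.t. space factors uniquely through `c`
via a continuous-short map; moreover, `ψ ↦ ψ ∘ c` is a bijection from the continuous-short
maps out of `(X̌,τ̌,ď)` onto the continuous-short maps out of `(X,τ,d)`. -/
theorem emt_fication {X : Type u} (τ : TopologicalSpace X) (d : X → X → ℝ≥0∞)
    (hd : IsExtPseudoDist d) :
    ∃ (Z : Type u) (τZ : TopologicalSpace Z) (dZ : Z → Z → ℝ≥0∞) (c : X → Z),
      IsEMT τZ dZ ∧ Function.Surjective c ∧ ContinuousShort τ d τZ dZ c ∧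
      (∀ (Y : Type v) (τY : TopologicalSpace Y) (dY : Y → Y → ℝ≥0∞), IsEMT τY dY →
        (∀ φ : X → Y, ContinuousShort τ d τY dY φ →
          ∃! ψ : Z → Y, ContinuousShort τZ dZ τY dY ψ ∧ ψ ∘ c = φ) ∧
        Set.BijOn (fun ψ : Z → Y => ψ ∘ c)
          {ψ | ContinuousShort τZ dZ τY dY ψ} {φ | ContinuousShort τ d τY dY φ}) :=
  emt_fication_general τ d
end

section
/- Let (X,τ,d) be an extended metric-topological space. Then there exist a compact extended metric-topological space (γX,γτ,γd) (i.e. with (γX,γτ) compact) and a continuous-short map ι : (X,τ,d) → (γX,γτ,γd) such that: (1) for every compact extended metric-topological space (Y,τ_Y,d_Y) and every continuous-short map φ : (X,τ,d) → (Y,τ_Y,d_Y) there exists a unique continuous-short map φ_γ : (γX,γτ,γd) → (Y,τ_Y,d_Y) with φ_γ ∘ ι = φ; (2) the image ι(X) is dense in (γX,γτ); (3) ι is a homeomorphism onto its image and is distance preserving (γd(ι(x),ι(y)) = d(x,y) for all x,y); and (4) for every compact extended metric-topological space (Y,τ_Y,d_Y), the assignment φ ↦ φ_γ is a bijection from the set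 of continuous-short maps (X,τ,d) → (Y,τ_Y,d_Y) onto the set of continuous-short maps (γX,γτ,γd) → (Y,τ_Y,d_Y). -/
open scoped ENNReal

universe u v w

open Set Topology

def emtEval {W : Type*} (τW : TopologicalSpace W) (dW : W → W → ℝ≥0∞) (w : W) :
    ↥(Lip1 τW dW) → ℝ := fun f => f.1 w

section
variable {W : Type*} [τW : TopologicalSpace W] {dW : W → W → ℝ≥0∞}

lemma emt_induced_eq :
    TopologicalSpace.induced (emtEval τW dW) Pi.topologicalSpace
      = ⨅ f : ↥(Lip1 τW dW), TopologicalSpace.induced (f : W → ℝ) inferInstance := by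
  rw [show (Pi.topologicalSpace : TopologicalSpace (↥(Lip1 τW dW) → ℝ))
      = ⨅ f, TopologicalSpace.induced (fun p => p f) inferInstance from rfl, induced_iInf]
  simp only [induced_compose]
  rfl

lemma emt_tau_eq (h : IsEMT τW dW) :
    τW = ⨅ f : ↥(Lip1 τW dW), TopologicalSpace.induced (f : W → ℝ) inferInstance := by
  conv_lhs => rw [h.2.1]
  rw [iInf_subtype]

lemma emt_dist_eq (h : IsEMT τW dW) (x y : W) :
    dW x y = ⨆ f : ↥(Lip1 τW dW), ENNReal.ofReal |f.1 x - f.1 y| := by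
  conv_lhs => rw [h.2.2 x y]
  rw [iSup_subtype]

lemma emt_eval_continuous : Continuous (emtEval τW dW) := by
  exact continuous_pi fun f => f.2.1

lemma emt_isInducing (h : IsEMT τW dW) : IsInducing (emtEval τW dW) :=
  ⟨by rw [emt_induced_eq, ← emt_tau_eq h]⟩

lemma emt_injective (h : IsEMT τW dW) : Function.Injective (emtEval τW dW) := by
  intro x y hxy
  have : dW x y = 0 := by
    rw [emt_dist_eq h]
    simp only [ENNReal.iSup_eq_zero]
    intro f
    have : f.1 x = f.1 y := congrFun hxy f
    simp [this]
  exact (h.1.eq_zero_iff x y).1 this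

lemma emt_isEmbedding (h : IsEMT τW dW) : IsEmbedding (emtEval τW dW) :=
  ⟨emt_isInducing h, emt_injective h⟩

lemma emt_t2 (h : IsEMT τW dW) : T2Space W :=
  (emt_isEmbedding h).t2Space
end

section gamma
variable {X : Type u} (τ : TopologicalSpace X) (d : X → X → ℝ≥0∞)

noncomputable def gammaDist (z w : ↥(closure (Set.range (emtEval τ d)))) : ℝ≥0∞ :=
  ⨆ f : ↥(Lip1 τ d), ENNReal.ofReal |z.1 f - w.1 f|

def gammaIota (x : X) : ↥(closure (Set.range (emtEval τ d))) :=
  ⟨emtEval τ d x, subset_closure ⟨x, rfl⟩⟩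

lemma gamma_coord_mem (z : ↥(closure (Set.range (emtEval τ d)))) (f : ↥(Lip1 τ d)) :
    z.1 f ∈ closure (Set.range fun x => (f : X → ℝ) x) := by
  have : closure (Set.range (emtEval τ d)) ⊆
      {p : ↥(Lip1 τ d) → ℝ | p f ∈ closure (Set.range fun x => (f : X → ℝ) x)} := by
    apply closure_minimal
    · rintro _ ⟨x, rfl⟩; exact subset_closure ⟨x, rfl⟩
    · exact IsClosed.preimage (continuous_apply f) isClosed_closure
  exact this z.2

lemma gamma_coord_bdd (f : ↥(Lip1 τ d)) :
    ∃ C : ℝ, ∀ z : ↥(closure (Set.range (emtEval τ d))), |z.1 f| ≤ C := by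
  obtain ⟨C, hC⟩ := f.2.2.1
  refine ⟨C, fun z => ?_⟩
  have hsub : closure (Set.range fun x => (f : X → ℝ) x) ⊆ {r : ℝ | |r| ≤ C} := by
    apply closure_minimal
    · rintro _ ⟨x, rfl⟩; exact hC x
    · exact IsClosed.preimage continuous_abs isClosed_Iic
  exact hsub (gamma_coord_mem τ d z f)

lemma gamma_compact : CompactSpace ↥(closure (Set.range (emtEval τ d))) := by
  rw [← isCompact_iff_compactSpace]
  have hK : IsCompact (Set.pi Set.univ
      (fun f : ↥(Lip1 τ d) => closure (Set.range fun x => (f : X → ℝ) x))) := by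
    apply isCompact_univ_pi
    intro f
    obtain ⟨C, hC⟩ := f.2.2.1
    refine IsCompact.of_isClosed_subset (isCompact_Icc (a := -C) (b := C)) isClosed_closure ?_
    apply closure_minimal
    · rintro _ ⟨x, rfl⟩; exact abs_le.1 (hC x)
    · exact isClosed_Icc
  refine IsCompact.of_isClosed_subset hK isClosed_closure ?_
  apply closure_minimal
  · rintro _ ⟨x, rfl⟩ f _; exact subset_closure ⟨x, rfl⟩
  · exact isClosed_set_pi fun f _ => isClosed_closure

lemma gamma_pi_mem (f : ↥(Lip1 τ d)) :
    (fun z : ↥(closure (Set.range (emtEval τ d))) => z.1 f)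
      ∈ Lip1 inferInstance (gammaDist τ d) := by
  refine ⟨(continuous_apply f).comp continuous_subtype_val, gamma_coord_bdd τ d f, ?_⟩
  intro z w
  exact le_iSup (fun g : ↥(Lip1 τ d) => ENNReal.ofReal |z.1 g - w.1 g|) f

lemma gamma_extdist : IsExtDist (gammaDist τ d) := by
  constructor
  · intro z w
    constructor
    · intro h0
      apply Subtype.ext; funext f
      have h1 := (ENNReal.iSup_eq_zero.1 h0) f
      rw [ENNReal.ofReal_eq_zero] at h1
      have h2 : |z.1 f - w.1 f| = 0 := le_antisymm h1 (abs_nonneg _)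
      exact sub_eq_zero.1 (abs_eq_zero.1 h2)
    · rintro rfl; simp [gammaDist]
  · intro z w; unfold gammaDist; congr 1; funext f; rw [abs_sub_comm]
  · intro z w y
    refine iSup_le fun f => ?_
    calc ENNReal.ofReal |z.1 f - w.1 f|
        ≤ ENNReal.ofReal (|z.1 f - y.1 f| + |y.1 f - w.1 f|) :=
          ENNReal.ofReal_le_ofReal (abs_sub_le _ _ _)
      _ = ENNReal.ofReal |z.1 f - y.1 f| + ENNReal.ofReal |y.1 f - w.1 f| :=
          ENNReal.ofReal_add (abs_nonneg _) (abs_nonneg _)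
      _ ≤ gammaDist τ d z y + gammaDist τ d y w :=
          add_le_add
            (le_iSup (fun g : ↥(Lip1 τ d) => ENNReal.ofReal |z.1 g - y.1 g|) f)
            (le_iSup (fun g : ↥(Lip1 τ d) => ENNReal.ofReal |y.1 g - w.1 g|) f)

set_option maxHeartbeats 2000000 in
lemma gamma_isEMT : IsEMT inferInstance (gammaDist τ d) := by
  refine ⟨gamma_extdist τ d, ?_, ?_⟩
  · apply le_antisymm
    · exact le_iInf₂ fun g hg => continuous_iff_le_induced.mp hg.1
    · have hst : (inferInstance : TopologicalSpace ↥(closure (Set.range (emtEval τ d))))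
          = ⨅ f : ↥(Lip1 τ d), TopologicalSpace.induced
              (fun z : ↥(closure (Set.range (emtEval τ d))) => z.1 f) inferInstance := by
        show TopologicalSpace.induced Subtype.val Pi.topologicalSpace = _
        rw [show (Pi.topologicalSpace : TopologicalSpace (↥(Lip1 τ d) → ℝ))
            = ⨅ f, TopologicalSpace.induced (fun p => p f) inferInstance from rfl, induced_iInf]
        simp only [induced_compose]
        rfl
      conv_rhs => rw [hst]
      exact le_iInf fun f => iInf₂_le _ (gamma_pi_mem τ d f)
  · intro z w
    apply le_antisymm
    · exact iSup_le fun f => le_iSup₂_of_le _ (gamma_pi_mem τ d f) le_rfl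
    · exact iSup₂_le fun g hg => hg.2.2 z w

lemma gamma_iota_dist (h : IsEMT τ d) (x y : X) :
    gammaDist τ d (gammaIota τ d x) (gammaIota τ d y) = d x y :=
  (@emt_dist_eq X τ d h x y).symm

lemma gamma_iota_continuous : @Continuous _ _ τ _ (gammaIota τ d) :=
  Continuous.subtype_mk (@emt_eval_continuous X τ d) _

lemma gamma_iota_embedding (h : IsEMT τ d) : @IsEmbedding _ _ τ _ (gammaIota τ d) := by
  letI := τ
  have he : IsEmbedding (Subtype.val ∘ gammaIota τ d) := emt_isEmbedding h
  exact IsEmbedding.of_comp (gamma_iota_continuous τ d) continuous_subtype_val he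

lemma gamma_dense : Dense (Set.range (gammaIota τ d)) := by
  intro z
  rw [closure_subtype]
  have : Subtype.val '' Set.range (gammaIota τ d) = Set.range (emtEval τ d) := by
    rw [← Set.range_comp]; rfl
  rw [this]
  exact z.2
end gamma


section univ
variable {X : Type u} [τ : TopologicalSpace X] {d : X → X → ℝ≥0∞}
variable {Y : Type v} [τY : TopologicalSpace Y] {dY : Y → Y → ℝ≥0∞}

lemma emt_univ (h : IsEMT τ d) (hY : IsEMT τY dY) [CompactSpace Y]
    (φ : X → Y) (hφ : ContinuousShort τ d τY dY φ) :
    ∃! ψ : ↥(closure (Set.range (emtEval τ d))) → Y,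
      ContinuousShort inferInstance (gammaDist τ d) τY dY ψ ∧ ψ ∘ gammaIota τ d = φ := by
  haveI := emt_t2 hY
  have hmem : ∀ g : ↥(Lip1 τY dY), (g : Y → ℝ) ∘ φ ∈ Lip1 τ d := by
    intro g
    refine ⟨g.2.1.comp hφ.1, ?_, ?_⟩
    · obtain ⟨C, hC⟩ := g.2.2.1; exact ⟨C, fun x => hC (φ x)⟩
    · intro x y
      exact le_trans (g.2.2.2 (φ x) (φ y)) (hφ.2 x y)
  let F : ↥(closure (Set.range (emtEval τ d))) → (↥(Lip1 τY dY) → ℝ) :=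
    fun z g => z.1 ⟨(g : Y → ℝ) ∘ φ, hmem g⟩
  have hFcont : Continuous F :=
    continuous_pi fun g => (continuous_apply _).comp continuous_subtype_val
  have hFι : ∀ x, F (gammaIota τ d x) = emtEval τY dY (φ x) := fun x => rfl
  have hrange : ∀ z, F z ∈ Set.range (emtEval τY dY) := by
    intro z
    have hcl : IsClosed (Set.range (emtEval τY dY)) :=
      (isCompact_range emt_eval_continuous).isClosed
    have hz : z ∈ closure (Set.range (gammaIota τ d)) := gamma_dense τ d z
    have hmemc : F z ∈ closure (F '' Set.range (gammaIota τ d)) :=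
      image_closure_subset_closure_image hFcont ⟨z, hz, rfl⟩
    refine closure_minimal ?_ hcl hmemc
    rintro _ ⟨_, ⟨x, rfl⟩, rfl⟩
    exact ⟨φ x, (hFι x).symm⟩
  choose ψ hψ using hrange
  have hinj := emt_injective hY
  have hψcont : Continuous ψ := by
    rw [(emt_isInducing hY).continuous_iff]
    have he : emtEval τY dY ∘ ψ = F := funext hψ
    rw [he]; exact hFcont
  have hψι : ψ ∘ gammaIota τ d = φ := by
    funext x
    apply hinj
    rw [Function.comp_apply, hψ, hFι]
  have hshort : ∀ z w, dY (ψ z) (ψ w) ≤ gammaDist τ d z w := by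
    intro z w
    rw [emt_dist_eq hY]
    refine iSup_le fun g => ?_
    have h1 : g.1 (ψ z) = F z g := congrFun (hψ z) g
    have h2 : g.1 (ψ w) = F w g := congrFun (hψ w) g
    rw [h1, h2]
    exact le_iSup (fun f : ↥(Lip1 τ d) => ENNReal.ofReal |z.1 f - w.1 f|)
      ⟨(g : Y → ℝ) ∘ φ, hmem g⟩
  refine ⟨ψ, ⟨⟨hψcont, hshort⟩, hψι⟩, ?_⟩
  intro ψ' hψ'
  refine Continuous.ext_on (gamma_dense τ d) hψ'.1.1 hψcont ?_
  rintro _ ⟨x, rfl⟩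
  have e1 : ψ' (gammaIota τ d x) = φ x := congrFun hψ'.2 x
  have e2 : ψ (gammaIota τ d x) = φ x := congrFun hψι x
  rw [e1, e2]
end univ

/-- **Compactification of an e.m.t. space.** For every e.m.t. space `(X,τ,d)` there exist a
compact e.m.t. space `(γX,γτ,γd)` and a continuous-short map `ι : (X,τ,d) → (γX,γτ,γd)`
such that: (1) every continuous-short map from `(X,τ,d)` into a compact e.m.t. space
factors uniquely through `ι` via a continuous-short map; (2) `ι(X)` is dense in `(γX,γτ)`;
(3) `ι` is a topological embedding and is distance preserving; (4) `ψ ↦ ψ ∘ ι` is a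
bijection from the continuous-short maps out of `(γX,γτ,γd)` into any compact e.m.t. space
onto the continuous-short maps out of `(X,τ,d)`. -/
theorem emt_compactification {X : Type u} (τ : TopologicalSpace X) (d : X → X → ℝ≥0∞)
    (h : IsEMT τ d) :
    ∃ (Z : Type u) (τZ : TopologicalSpace Z) (dZ : Z → Z → ℝ≥0∞) (ι : X → Z),
      IsEMT τZ dZ ∧ @CompactSpace Z τZ ∧ ContinuousShort τ d τZ dZ ι ∧
      (∀ (Y : Type v) (τY : TopologicalSpace Y) (dY : Y → Y → ℝ≥0∞),
        IsEMT τY dY → @CompactSpace Y τY →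
        ∀ φ : X → Y, ContinuousShort τ d τY dY φ →
          ∃! ψ : Z → Y, ContinuousShort τZ dZ τY dY ψ ∧ ψ ∘ ι = φ) ∧
      @Dense Z τZ (Set.range ι) ∧
      (@Topology.IsEmbedding X Z τ τZ ι ∧ ∀ x y : X, dZ (ι x) (ι y) = d x y) ∧
      (∀ (Y : Type v) (τY : TopologicalSpace Y) (dY : Y → Y → ℝ≥0∞),
        IsEMT τY dY → @CompactSpace Y τY →
        Set.BijOn (fun ψ : Z → Y => ψ ∘ ι)
          {ψ | ContinuousShort τZ dZ τY dY ψ} {φ | ContinuousShort τ d τY dY φ}) := by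
  refine ⟨↥(closure (Set.range (emtEval τ d))), inferInstance, gammaDist τ d, gammaIota τ d,
    gamma_isEMT τ d, gamma_compact τ d,
    ⟨gamma_iota_continuous τ d, fun x y => le_of_eq (gamma_iota_dist τ d h x y)⟩,
    ?_, gamma_dense τ d, ⟨gamma_iota_embedding τ d h, gamma_iota_dist τ d h⟩, ?_⟩
  · intro Y τY dY hY hc φ hφ
    exact @emt_univ X τ d Y τY dY h hY hc φ hφ
  · intro Y τY dY hY hc
    refine ⟨?_, ?_, ?_⟩
    · intro ψ hψ
      exact ⟨hψ.1.comp (gamma_iota_continuous τ d),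
        fun x y => le_trans (hψ.2 _ _) (le_of_eq (gamma_iota_dist τ d h x y))⟩
    · intro ψ₁ h1 ψ₂ h2 heq
      letI := τY
      haveI : T2Space Y := emt_t2 hY
      refine Continuous.ext_on (gamma_dense τ d) h1.1 h2.1 ?_
      rintro _ ⟨x, rfl⟩
      exact congrFun heq x
    · intro φ hφ
      obtain ⟨ψ, ⟨hcs, hcomp⟩, -⟩ := @emt_univ X τ d Y τY dY h hY hc φ hφ
      exact ⟨ψ, hcs, hcomp⟩
end

section
/- Let (X,τ,d) be a pre-e.m.t. space such that (X,τ) is Hausdorff. Then (X,τ,d) is an extended metric-topological space if and only if the following holds: for every pre-e.pm.t. space (Y,τ_Y,d_Y) and every map φ : Y → X such that f ∘ φ ∈ LIP_{b,1}(Y,τ_Y,d_Y) for every f ∈ LIP_{b,1}(X,τ,d), the map φ : (Y,τ_Y,d_Y) → (X,τ,d) is continuous-short. -/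
open scoped ENNReal

universe u v w

/-- Let `(X,τ,d)` be a pre-e.m.t. space with `(X,τ)` Hausdorff. Then `(X,τ,d)` is an e.m.t.
space if and only if: for every pre-e.pm.t. space `(Y,τ_Y,d_Y)` and every map `φ : Y → X`
such that `f ∘ φ ∈ LIP_{b,1}(Y,τ_Y,d_Y)` for every `f ∈ LIP_{b,1}(X,τ,d)`, the map
`φ : (Y,τ_Y,d_Y) → (X,τ,d)` is continuous-short. -/
theorem isEMT_iff_maps_into {X : Type u} (τ : TopologicalSpace X) (d : X → X → ℝ≥0∞)
    (hd : IsExtDist d) (hT2 : @T2Space X τ) :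
    IsEMT τ d ↔
      ∀ (Y : Type u) (τY : TopologicalSpace Y) (dY : Y → Y → ℝ≥0∞),
        IsExtPseudoDist dY →
        ∀ φ : Y → X, (∀ f ∈ Lip1 τ d, (f ∘ φ) ∈ Lip1 τY dY) →
          ContinuousShort τY dY τ d φ := by
  classical
  set d' : X → X → ℝ≥0∞ := fun x y => ⨆ f ∈ Lip1 τ d, ENNReal.ofReal |f x - f y| with hd'
  set τ' : TopologicalSpace X := ⨅ f ∈ Lip1 τ d, TopologicalSpace.induced f inferInstance
    with hτ'
  constructor
  · rintro ⟨-, hτ, hrec⟩ Y τY dY hdY φ hφ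
    constructor
    · rw [hτ, continuous_iInf_rng]
      intro f
      rw [continuous_iInf_rng]
      intro hf
      rw [continuous_induced_rng]
      exact (hφ f hf).1
    · intro x y
      rw [hrec]
      exact iSup_le fun f => iSup_le fun hf => (hφ f hf).2.2 x y
  · intro H
    have hd'le : ∀ x y, d' x y ≤ d x y :=
      fun x y => iSup_le fun f => iSup_le fun hf => hf.2.2 x y
    have hpseudo : IsExtPseudoDist d' := by
      refine ⟨fun x => ?_, fun x y => ?_, fun x y z => ?_⟩
      · simp [hd']
      · simp only [hd', abs_sub_comm]
      · refine iSup_le fun f => iSup_le fun hf => ?_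
        calc ENNReal.ofReal |f x - f y|
            ≤ ENNReal.ofReal (|f x - f z| + |f z - f y|) :=
              ENNReal.ofReal_le_ofReal (abs_sub_le (f x) (f z) (f y))
          _ = ENNReal.ofReal |f x - f z| + ENNReal.ofReal |f z - f y| :=
              ENNReal.ofReal_add (abs_nonneg _) (abs_nonneg _)
          _ ≤ d' x z + d' z y := by
              gcongr
              · exact le_iSup₂ (f := fun g (_ : g ∈ Lip1 τ d) => ENNReal.ofReal |g x - g z|) f hf
              · exact le_iSup₂ (f := fun g (_ : g ∈ Lip1 τ d) => ENNReal.ofReal |g z - g y|) f hf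
    have hmem : ∀ f ∈ Lip1 τ d, (f ∘ id) ∈ Lip1 τ' d' := by
      intro f hf
      refine ⟨?_, hf.2.1, ?_⟩
      · exact continuous_iff_le_induced.mpr (iInf₂_le f hf)
      · intro x y
        exact le_iSup₂ (f := fun g (_ : g ∈ Lip1 τ d) => ENNReal.ofReal |g x - g y|) f hf
    obtain ⟨hcont, hshort⟩ := H X τ' d' hpseudo id hmem
    refine ⟨hd, le_antisymm ?_ (continuous_id_iff_le.mp hcont), fun x y =>
      le_antisymm (hshort x y) (hd'le x y)⟩
    exact le_iInf₂ fun f hf => continuous_iff_le_induced.mp hf.1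
end

section
/- Let (X,τ,d) be a pre-e.m.t. space such that (X,τ) is Hausdorff. Then (X,τ,d) is an extended metric-topological space if and only if the following two conditions hold: (a) for every τ-closed set C ⊆ X and every point x̄ ∈ X∖C there exists f ∈ LIP_{b,1}(X,τ,d) with f = 0 on C and f(x̄) > 0; (b) if in addition C is τ-compact, then for every real λ with 0 < λ ≤ d(x̄,C) (where d(x̄,C) := inf{d(x̄,y) : y ∈ C}) the function f in (a) can be chosen so that f(x̄) = λ. -/
open scoped ENNReal

universe u v w

/-!
Condition (a) says that the sets `{f > 0}`, `f ∈ LIP_{b,1}`, form a basis of `τ`. Since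
`LIP_{b,1}` is a lattice containing the bumps `ε - |f - f x₀|`, these sets also form a basis of
the initial topology of `LIP_{b,1}`, so (a) is equivalent to `τ` being that initial topology.
Condition (b) for singletons `C = {y}` recovers `d`.

Conversely, recovery of `d` gives, for each `y ∈ C`, a function peaking at `x₀` with value `λ`
and taking values `< ε` near `y`; by compactness finitely many of them suffice, and their minimum
yields `g` vanishing on `C` with `λ - ε ≤ g x₀ ≤ λ`. Clamping the `n`-th such approximant into a
window of width `2⁻ⁿ` above the previous one produces a uniformly convergent sequence in
`LIP_{b,1}`, whose limit takes the value `λ` at `x₀` exactly.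
-/

open Filter Topology Set

noncomputable def staircase (a : ℕ → ℝ) : ℕ → ℝ
  | 0 => a 0
  | n + 1 => max (staircase a n) (min (a (n + 1)) (staircase a n + 2⁻¹ ^ (n + 1)))

namespace staircase

variable (a : ℕ → ℝ)

lemma le_succ (n : ℕ) : staircase a n ≤ staircase a (n + 1) :=
  le_max_left _ _

lemma monotone : Monotone (staircase a) :=
  monotone_nat_of_le_succ (le_succ a)

lemma le_add_sub {n m : ℕ} (hnm : n ≤ m) :
    staircase a m ≤ staircase a n + (2⁻¹ ^ n - 2⁻¹ ^ m) := by
  induction m, hnm using Nat.le_induction with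
  | base => simp
  | succ m _ ih =>
    have hstep : staircase a (m + 1) ≤ staircase a m + 2⁻¹ ^ (m + 1) :=
      max_le (le_add_of_nonneg_right (by positivity)) (min_le_right _ _)
    have hhalf : (2⁻¹ : ℝ) ^ m = 2⁻¹ ^ (m + 1) + 2⁻¹ ^ (m + 1) := by ring
    linarith

lemma le_add {n m : ℕ} (hnm : n ≤ m) : staircase a m ≤ staircase a n + 2⁻¹ ^ n :=
  (le_add_sub a hnm).trans (by gcongr; exact sub_le_self _ (by positivity))

lemma eq_zero (ha : ∀ n, a n = 0) (n : ℕ) : staircase a n = 0 := by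
  induction n with
  | zero => exact ha 0
  | succ n ih =>
    simp only [staircase, ih, ha, zero_add]
    rw [min_eq_left (by positivity), max_self]

lemma mem_Icc {lam : ℝ} (ha : ∀ n, a n ∈ Icc (lam - 2⁻¹ ^ n) lam) (n : ℕ) :
    staircase a n ∈ Icc (lam - 2⁻¹ ^ n) lam := by
  induction n with
  | zero => exact ha 0
  | succ n ih =>
    obtain ⟨ih_ge, ih_le⟩ := ih
    obtain ⟨ha_ge, ha_le⟩ := ha (n + 1)
    have hhalf : (2⁻¹ : ℝ) ^ n = 2⁻¹ ^ (n + 1) + 2⁻¹ ^ (n + 1) := by ring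
    exact ⟨le_max_of_le_right (le_min ha_ge (by linarith)),
      max_le ih_le (min_le_of_left_le ha_le)⟩

end staircase

lemma tendstoUniformly_ciSup_of_le_add {X : Type*} {h : ℕ → X → ℝ} {c : ℕ → ℝ}
    (hc : Tendsto c atTop (𝓝 0)) (hmono : ∀ x, Monotone (h · x))
    (hclose : ∀ x {n m}, n ≤ m → h m x ≤ h n x + c n) :
    TendstoUniformly h (fun x => ⨆ n, h n x) atTop := by
  have hbdd : ∀ x, BddAbove (range (h · x)) := fun x =>
    ⟨h 0 x + c 0, forall_mem_range.2 fun m => hclose x m.zero_le⟩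
  rw [Metric.tendstoUniformly_iff]
  intro ε hε
  filter_upwards [hc.eventually (gt_mem_nhds hε)] with n hn x
  have hle : h n x ≤ ⨆ m, h m x := le_ciSup (hbdd x) n
  have hge : ⨆ m, h m x ≤ h n x + c n := ciSup_le fun m =>
    (le_total n m).elim (hclose x) fun hmn =>
      (hmono x hmn).trans (le_add_of_nonneg_right ((le_add_iff_nonneg_right _).1 (hclose x le_rfl)))
  rw [Real.dist_eq, abs_of_nonneg (by linarith)]
  linarith

namespace Lip1

abbrev initialTopology {X : Type*} (τ : TopologicalSpace X) (d : X → X → ℝ≥0∞) :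
    TopologicalSpace X :=
  ⨅ f ∈ Lip1 τ d, .induced f inferInstance

variable {X : Type*} [τ : TopologicalSpace X] {d : X → X → ℝ≥0∞} {f g : X → ℝ}

lemma const_mem (c : ℝ) : (fun _ => c) ∈ Lip1 τ d :=
  ⟨continuous_const, ⟨|c|, fun _ => le_rfl⟩, fun x y => by simp⟩

lemma comp_mem (hf : f ∈ Lip1 τ d) {φ : ℝ → ℝ} (hφ : LipschitzWith 1 φ) :
    φ ∘ f ∈ Lip1 τ d := by
  obtain ⟨hcont, ⟨C, hC⟩, hlip⟩ := hf
  have hφ' : ∀ s t, |φ s - φ t| ≤ |s - t| := fun s t => by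
    simpa [Real.dist_eq] using hφ.dist_le_mul s t
  refine ⟨hφ.continuous.comp hcont, ⟨|φ 0| + C, fun x => ?_⟩, fun x y => ?_⟩
  · have h1 := abs_sub_abs_le_abs_sub (φ (f x)) (φ 0)
    have h2 := hφ' (f x) 0
    rw [sub_zero] at h2
    simp only [Function.comp_apply]
    linarith [hC x]
  · exact (ENNReal.ofReal_le_ofReal (hφ' _ _)).trans (hlip x y)

lemma add_const_mem (hf : f ∈ Lip1 τ d) (c : ℝ) : (fun x => f x + c) ∈ Lip1 τ d :=
  comp_mem (φ := (· + c)) hf <| LipschitzWith.of_le_add fun s t => by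
    rw [Real.dist_eq]; linarith [le_abs_self (s - t)]

lemma posPart_sub_const_mem (hf : f ∈ Lip1 τ d) (c : ℝ) : (fun x => max (f x - c) 0) ∈ Lip1 τ d :=
  comp_mem (φ := fun t => max (t - c) 0) hf <| LipschitzWith.max_const
    (LipschitzWith.of_le_add fun s t => by rw [Real.dist_eq]; linarith [le_abs_self (s - t)]) 0

lemma const_sub_abs_sub_mem (hf : f ∈ Lip1 τ d) (a c : ℝ) :
    (fun x => a - |f x - c|) ∈ Lip1 τ d :=
  comp_mem (φ := fun t => a - |t - c|) hf <| LipschitzWith.of_le_add fun s t => by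
    rw [Real.dist_eq]; linarith [abs_sub_le t s c, abs_sub_comm s t]

lemma sup_mem (hf : f ∈ Lip1 τ d) (hg : g ∈ Lip1 τ d) : f ⊔ g ∈ Lip1 τ d := by
  obtain ⟨hfc, ⟨Cf, hCf⟩, hfl⟩ := hf
  obtain ⟨hgc, ⟨Cg, hCg⟩, hgl⟩ := hg
  refine ⟨hfc.max hgc, ⟨max Cf Cg, fun x => ?_⟩, fun x y => ?_⟩
  · exact abs_max_le_max_abs_abs.trans (max_le_max (hCf x) (hCg x))
  · refine (ENNReal.ofReal_le_ofReal (abs_max_sub_max_le_max _ _ _ _)).trans ?_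
    rw [ENNReal.ofReal_max]
    exact max_le (hfl x y) (hgl x y)

lemma inf_mem (hf : f ∈ Lip1 τ d) (hg : g ∈ Lip1 τ d) : f ⊓ g ∈ Lip1 τ d := by
  obtain ⟨hfc, ⟨Cf, hCf⟩, hfl⟩ := hf
  obtain ⟨hgc, ⟨Cg, hCg⟩, hgl⟩ := hg
  refine ⟨hfc.min hgc, ⟨max Cf Cg, fun x => ?_⟩, fun x y => ?_⟩
  · exact abs_min_le_max_abs_abs.trans (max_le_max (hCf x) (hCg x))
  · refine (ENNReal.ofReal_le_ofReal (abs_min_sub_min_le_max _ _ _ _)).trans ?_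
    rw [ENNReal.ofReal_max]
    exact max_le (hfl x y) (hgl x y)

lemma finset_inf'_mem {ι : Type*} {t : Finset ι} (ht : t.Nonempty) {p : ι → X → ℝ}
    (hp : ∀ i ∈ t, p i ∈ Lip1 τ d) : t.inf' ht p ∈ Lip1 τ d :=
  Finset.inf'_induction ht p (fun _ h₁ _ h₂ => inf_mem h₁ h₂) hp

lemma of_tendstoUniformly {h : ℕ → X → ℝ} (hh : ∀ n, h n ∈ Lip1 τ d)
    (hlim : TendstoUniformly h f atTop) : f ∈ Lip1 τ d := by
  refine ⟨hlim.continuous (Frequently.of_forall fun n => (hh n).1), ?_, fun x y => ?_⟩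
  · obtain ⟨n, hn⟩ := (Metric.tendstoUniformly_iff.1 hlim 1 one_pos).exists
    obtain ⟨C, hC⟩ := (hh n).2.1
    refine ⟨C + 1, fun x => ?_⟩
    have hclose := hn x
    rw [Real.dist_eq] at hclose
    linarith [abs_sub_abs_le_abs_sub (f x) (h n x), hC x]
  · have hconv : Tendsto (fun n => ENNReal.ofReal |h n x - h n y|) atTop
        (𝓝 (ENNReal.ofReal |f x - f y|)) :=
      (ENNReal.continuous_ofReal.tendsto _).comp
        ((hlim.tendsto_at x).sub (hlim.tendsto_at y)).abs
    exact le_of_tendsto' hconv fun n => (hh n).2.2 x y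

lemma staircase_mem {g : ℕ → X → ℝ} (hg : ∀ n, g n ∈ Lip1 τ d) (n : ℕ) :
    (fun x => staircase (g · x) n) ∈ Lip1 τ d := by
  induction n with
  | zero => exact hg 0
  | succ n ih => exact sup_mem ih (inf_mem (hg (n + 1)) (add_const_mem ih _))

lemma exists_eq_of_forall_approx {C : Set X} {x₀ : X} {lam : ℝ}
    (happrox : ∀ ε > 0, ∃ g ∈ Lip1 τ d, (∀ y ∈ C, g y = 0) ∧ g x₀ ∈ Icc (lam - ε) lam) :
    ∃ f ∈ Lip1 τ d, (∀ y ∈ C, f y = 0) ∧ f x₀ = lam := by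
  choose g hg hgC hgx₀ using fun n : ℕ => happrox (2⁻¹ ^ n) (by positivity)
  have hc : Tendsto (fun n : ℕ => (2⁻¹ : ℝ) ^ n) atTop (𝓝 0) :=
    tendsto_pow_atTop_nhds_zero_of_lt_one (by norm_num) (by norm_num)
  have hlim := tendstoUniformly_ciSup_of_le_add hc
    (fun x => staircase.monotone (g · x)) (fun x _ _ => staircase.le_add (g · x))
  refine ⟨_, of_tendstoUniformly (staircase_mem hg) hlim, fun y hy => ?_, ?_⟩
  · simp only [staircase.eq_zero _ fun n => hgC n y hy, ciSup_const]
  · have hx₀ : Tendsto (fun n => staircase (g · x₀) n) atTop (𝓝 lam) :=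
      tendsto_of_tendsto_of_tendsto_of_le_of_le (by simpa using tendsto_const_nhds.sub hc)
        tendsto_const_nhds (fun n => (staircase.mem_Icc _ hgx₀ n).1)
        (fun n => (staircase.mem_Icc _ hgx₀ n).2)
    exact tendsto_nhds_unique (hlim.tendsto_at x₀) hx₀

end Lip1

section EMT

variable {X : Type*} [τ : TopologicalSpace X] {d : X → X → ℝ≥0∞}

lemma exists_lip1_peak_of_le_dist
    (hrec : ∀ x y, d x y = ⨆ f ∈ Lip1 τ d, ENNReal.ofReal |f x - f y|)
    {x₀ y : X} {lam ε : ℝ} (hlam : 0 < lam) (hε : 0 < ε) (hdist : ENNReal.ofReal lam ≤ d x₀ y) :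
    ∃ p ∈ Lip1 τ d, p x₀ = lam ∧ p y < ε := by
  have hlt : ENNReal.ofReal (lam - ε) < d x₀ y :=
    ((ENNReal.ofReal_lt_ofReal_iff hlam).2 (by linarith)).trans_le hdist
  rw [hrec, lt_biSup_iff] at hlt
  obtain ⟨F, hF, hFlt⟩ := hlt
  have hsep : lam - ε < |F y - F x₀| := abs_sub_comm (F x₀) (F y) ▸
    (ENNReal.ofReal_lt_ofReal_iff'.1 hFlt).1
  exact ⟨fun x => lam - |F x - F x₀|, Lip1.const_sub_abs_sub_mem hF lam (F x₀), by simp,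
    by linarith⟩

lemma exists_lip1_approx_of_isCompact {C : Set X} (hC : IsCompact C) {x₀ : X} {lam ε : ℝ}
    (hlam : 0 ≤ lam) (hε : 0 < ε)
    (hpeak : ∀ y ∈ C, ∃ p ∈ Lip1 τ d, p x₀ = lam ∧ p y < ε) :
    ∃ g ∈ Lip1 τ d, (∀ y ∈ C, g y = 0) ∧ g x₀ ∈ Icc (lam - ε) lam := by
  rcases C.eq_empty_or_nonempty with rfl | ⟨y₀, hy₀⟩
  · exact ⟨fun _ => lam, Lip1.const_mem lam, fun _ h => h.elim, by linarith, le_rfl⟩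
  choose! p hp hpx₀ hpy using hpeak
  obtain ⟨t, htC, hCt⟩ := hC.elim_nhds_subcover (fun y => {x | p y x < ε}) fun y hy =>
    (isOpen_lt (hp y hy).1 continuous_const).mem_nhds (hpy y hy)
  have ht : t.Nonempty := by
    obtain ⟨y, hyt, -⟩ := mem_iUnion₂.1 (hCt hy₀)
    exact ⟨y, hyt⟩
  have hqx₀ : t.inf' ht p x₀ = lam := by
    rw [Finset.inf'_apply, Finset.inf'_congr ht rfl fun y hy => hpx₀ y (htC y hy),
      Finset.inf'_const]
  refine ⟨fun x => max (t.inf' ht p x - ε) 0,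
    Lip1.posPart_sub_const_mem (Lip1.finset_inf'_mem ht fun y hy => hp y (htC y hy)) ε,
    fun y hy => ?_, ?_⟩
  · obtain ⟨z, hzt, hyz⟩ := mem_iUnion₂.1 (hCt hy)
    have hqy : t.inf' ht p y ≤ p z y := (Finset.inf'_apply ht p y).trans_le (Finset.inf'_le _ hzt)
    exact max_eq_right (by linarith [show p z y < ε from hyz])
  · simp only [hqx₀]
    exact ⟨le_max_left _ _, max_le (by linarith) hlam⟩

lemma exists_pos_subset_of_mem_nhds_initialTopology {U : Set X} {x₀ : X}
    (hU : U ∈ @nhds X (Lip1.initialTopology τ d) x₀) :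
    ∃ f ∈ Lip1 τ d, 0 < f x₀ ∧ {x | 0 < f x} ⊆ U := by
  let F : Filter X :=
    { sets := {U | ∃ f ∈ Lip1 τ d, 0 < f x₀ ∧ {x | 0 < f x} ⊆ U}
      univ_sets := ⟨fun _ => 1, Lip1.const_mem 1, one_pos, subset_univ _⟩
      sets_of_superset := fun ⟨f, hf, hfx₀, hfU⟩ hUV => ⟨f, hf, hfx₀, hfU.trans hUV⟩
      inter_sets := fun ⟨f, hf, hfx₀, hfU⟩ ⟨g, hg, hgx₀, hgV⟩ =>
        ⟨f ⊓ g, Lip1.inf_mem hf hg, lt_min hfx₀ hgx₀, fun x (hx : 0 < min (f x) (g x)) =>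
          ⟨hfU (lt_min_iff.1 hx).1, hgV (lt_min_iff.1 hx).2⟩⟩ }
  suffices F ≤ @nhds X (Lip1.initialTopology τ d) x₀ from this hU
  simp only [nhds_iInf, nhds_induced, le_iInf_iff, ← tendsto_iff_comap]
  intro f hf
  rw [Metric.tendsto_nhds]
  intro ε hε
  exact ⟨fun x => ε - |f x - f x₀|, Lip1.const_sub_abs_sub_mem hf ε (f x₀), by simpa using hε,
    fun x hx => by simpa [Real.dist_eq] using hx⟩

lemma exists_lip1_separating_of_eq_initialTopology
    (hτ : τ = Lip1.initialTopology τ d) {C : Set X} (hC : IsClosed C) {x₀ : X}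
    (hx₀ : x₀ ∉ C) : ∃ f ∈ Lip1 τ d, (∀ y ∈ C, f y = 0) ∧ 0 < f x₀ := by
  have hCc := hC.isOpen_compl.mem_nhds hx₀
  rw [hτ] at hCc
  obtain ⟨f, hf, hfx₀, hfC⟩ := exists_pos_subset_of_mem_nhds_initialTopology hCc
  refine ⟨f ⊔ fun _ => 0, Lip1.sup_mem hf (Lip1.const_mem 0), fun y hy => ?_,
    lt_max_of_lt_left hfx₀⟩
  exact max_eq_right (not_lt.1 fun hfy => hfC hfy hy)

lemma eq_initialTopology_of_separating
    (hsep : ∀ C : Set X, IsClosed C → ∀ x₀ ∉ C, ∃ f ∈ Lip1 τ d, (∀ y ∈ C, f y = 0) ∧ 0 < f x₀) :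
    τ = Lip1.initialTopology τ d := by
  refine le_antisymm (le_iInf₂ fun f hf => continuous_iff_le_induced.1 hf.1)
    (le_of_nhds_le_nhds fun x U hU => ?_)
  obtain ⟨V, hVU, hV, hxV⟩ := mem_nhds_iff.1 hU
  obtain ⟨f, hf, hfV, hfx⟩ := hsep Vᶜ hV.isClosed_compl x (not_not_intro hxV)
  have hcont : Continuous[Lip1.initialTopology τ d, _] f :=
    continuous_iInf_dom (i := f) (continuous_iInf_dom (i := hf) continuous_induced_dom)
  have hopen : IsOpen[Lip1.initialTopology τ d] (f ⁻¹' Ioi 0) :=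
    @Continuous.isOpen_preimage X ℝ (Lip1.initialTopology τ d) _ f hcont _ isOpen_Ioi
  have hnhds := @IsOpen.mem_nhds X (Lip1.initialTopology τ d) _ _ hopen hfx
  refine mem_of_superset hnhds fun y hy => hVU ?_
  by_contra hyV
  exact (hfV y hyV ▸ hy : (0 : ℝ) < 0).false

lemma dist_eq_iSup_of_exists_lip1 (hd : IsExtDist d) (x y : X)
    (hlam : ∀ lam : ℝ, 0 < lam → x ≠ y → ENNReal.ofReal lam ≤ d x y →
      ∃ f ∈ Lip1 τ d, f y = 0 ∧ f x = lam) :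
    d x y = ⨆ f ∈ Lip1 τ d, ENNReal.ofReal |f x - f y| := by
  refine le_antisymm (le_of_forall_lt fun r hr => ?_) (iSup₂_le fun f hf => hf.2.2 x y)
  obtain ⟨lam, -, hrlam, hlamd⟩ := ENNReal.lt_iff_exists_real_btwn.1 hr
  have hlam_pos : 0 < lam := ENNReal.ofReal_pos.1 (hrlam.trans_le' zero_le)
  have hxy : x ≠ y := fun h => by simp [h, (hd.eq_zero_iff y y).2 rfl] at hlamd
  obtain ⟨f, hf, hfy, hfx⟩ := hlam lam hlam_pos hxy hlamd.le
  exact hrlam.trans_le (le_iSup₂_of_le f hf (by simp [hfx, hfy, abs_of_pos hlam_pos]))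

end EMT

/-- Let `(X,τ,d)` be a pre-e.m.t. space with `(X,τ)` Hausdorff. Then `(X,τ,d)` is an e.m.t.
space if and only if: (a) for every `τ`-closed set `C` and every `x̄ ∉ C` there is
`f ∈ LIP_{b,1}(X,τ,d)` with `f = 0` on `C` and `f x̄ > 0`; and (b) if moreover `C` is
`τ`-compact, then for every real `λ` with `0 < λ` and `λ ≤ d(x̄,C)` the function `f` can be
chosen with `f x̄ = λ`. -/
theorem isEMT_iff_separation {X : Type u} (τ : TopologicalSpace X) (d : X → X → ℝ≥0∞)
    (hd : IsExtDist d) (hT2 : @T2Space X τ) :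
    IsEMT τ d ↔
      ((∀ C : Set X, @IsClosed X τ C → ∀ x₀ ∉ C,
          ∃ f ∈ Lip1 τ d, (∀ y ∈ C, f y = 0) ∧ 0 < f x₀) ∧
       (∀ C : Set X, @IsClosed X τ C → @IsCompact X τ C → ∀ x₀ ∉ C, ∀ lam : ℝ,
          0 < lam → ENNReal.ofReal lam ≤ (⨅ y ∈ C, d x₀ y) →
          ∃ f ∈ Lip1 τ d, (∀ y ∈ C, f y = 0) ∧ f x₀ = lam)) := by
  constructor
  · rintro ⟨-, hτ, hrec⟩
    refine ⟨fun C hC x₀ hx₀ => exists_lip1_separating_of_eq_initialTopology hτ hC hx₀,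
      fun C _ hC x₀ _ lam hlam hlamC => Lip1.exists_eq_of_forall_approx fun ε hε => ?_⟩
    refine exists_lip1_approx_of_isCompact hC hlam.le hε fun y hy => ?_
    exact exists_lip1_peak_of_le_dist hrec hlam hε (hlamC.trans (iInf₂_le y hy))
  · rintro ⟨hsep, hpeak⟩
    refine ⟨hd, eq_initialTopology_of_separating hsep, fun x y =>
      dist_eq_iSup_of_exists_lip1 hd x y fun lam hlam hxy hlamd => ?_⟩
    obtain ⟨f, hf, hfy, hfx⟩ := hpeak {y} isClosed_singleton isCompact_singleton x hxy lam hlam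
      (by simpa using hlamd)
    exact ⟨f, hf, hfy y rfl, hfx⟩
end

section
/- Let (X,τ,d) be a pre-e.m.t. space such that (X,τ) is Hausdorff. Then (X,τ,d) is an extended metric-topological space if and only if there exists a set Λ of bounded pseudodistances on X such that τ is the initial topology of the family of functions {δ(·,x) : δ ∈ Λ, x ∈ X} and d(x,y) = sup{δ(x,y) : δ ∈ Λ} for all x,y ∈ X. -/
open scoped ENNReal

universe u v w

/-- A bounded pseudodistance on `X` (real-valued). -/
def IsBddPseudoDist {X : Type*} (δ : X → X → ℝ) : Prop :=
  (∀ x y, 0 ≤ δ x y) ∧ (∀ x, δ x x = 0) ∧ (∀ x y, δ x y = δ y x) ∧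
  (∀ x y z, δ x y ≤ δ x z + δ z y) ∧ (∃ C : ℝ, ∀ x y, δ x y ≤ C)

/-- If `y ↦ |f y - f x₀|` is continuous, then `f` is continuous at `x₀`. -/
lemma continuousAt_of_abs_sub {X : Type u} [TopologicalSpace X] (f : X → ℝ) (x₀ : X)
    (h : Continuous (fun y => |f y - f x₀|)) : ContinuousAt f x₀ := by
  rw [ContinuousAt, tendsto_iff_dist_tendsto_zero]
  have := h.continuousAt (x := x₀)
  simp only [ContinuousAt, sub_self, abs_zero] at this
  simpa [Real.dist_eq] using this

/-- If all `y ↦ |f y - f x₀|` are continuous for a topology `σ`, then `f` is `σ`-continuous. -/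
lemma le_induced_of_abs_sub {X : Type u} (σ : TopologicalSpace X) (f : X → ℝ)
    (h : ∀ x₀ : X, σ ≤ TopologicalSpace.induced (fun y => |f y - f x₀|) inferInstance) :
    σ ≤ TopologicalSpace.induced f inferInstance := by
  letI := σ
  refine continuous_iff_le_induced.mp ?_
  rw [continuous_iff_continuousAt]
  intro x₀
  exact continuousAt_of_abs_sub f x₀ (continuous_iff_le_induced.mpr (h x₀))

/-- Let `(X,τ,d)` be a pre-e.m.t. space with `(X,τ)` Hausdorff. Then `(X,τ,d)` is an e.m.t.
space if and only if there is a set `Λ` of bounded pseudodistances on `X` such that `τ` is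
the initial topology of the family `{δ(·,x) : δ ∈ Λ, x ∈ X}` and
`d(x,y) = sup {δ(x,y) : δ ∈ Λ}` for all `x,y`. -/
theorem isEMT_iff_pseudoDist_family {X : Type u} (τ : TopologicalSpace X)
    (d : X → X → ℝ≥0∞) (hd : IsExtDist d) (hT2 : @T2Space X τ) :
    IsEMT τ d ↔
      ∃ Λ : Set (X → X → ℝ), (∀ δ ∈ Λ, IsBddPseudoDist δ) ∧
        τ = (⨅ δ ∈ Λ, ⨅ x : X, TopologicalSpace.induced (fun y => δ y x) inferInstance) ∧
        (∀ x y : X, d x y = ⨆ δ ∈ Λ, ENNReal.ofReal (δ x y)) := by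
  letI := τ
  constructor
  · rintro ⟨-, hτ, hdd⟩
    refine ⟨{g | ∃ f ∈ Lip1 τ d, g = fun x y => |f x - f y|}, ?_, ?_, ?_⟩
    · rintro g ⟨f, ⟨hc, ⟨C, hC⟩, hl⟩, rfl⟩
      exact ⟨fun x y => abs_nonneg _, fun x => by simp, fun x y => abs_sub_comm _ _,
        fun x y z => abs_sub_le _ _ _,
        ⟨C + C, fun x y => (abs_sub _ _).trans (add_le_add (hC x) (hC y))⟩⟩
    · apply le_antisymm
      · refine le_iInf₂ fun g hg => le_iInf fun x => ?_
        obtain ⟨f, hf, rfl⟩ := hg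
        exact continuous_iff_le_induced.mp ((hf.1.sub continuous_const).abs)
      · conv_rhs => rw [hτ]
        refine le_iInf₂ fun f hf => ?_
        refine le_induced_of_abs_sub _ f fun x₀ => ?_
        exact iInf₂_le_of_le (fun x y => |f x - f y|) ⟨f, hf, rfl⟩ (iInf_le _ x₀)
    · intro x y
      rw [hdd x y]
      apply le_antisymm
      · refine iSup₂_le fun f hf => ?_
        refine le_iSup₂_of_le (fun x y => |f x - f y|) ⟨f, hf, rfl⟩ le_rfl
      · refine iSup₂_le fun g hg => ?_
        obtain ⟨f, hf, rfl⟩ := hg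
        exact le_iSup₂_of_le f hf le_rfl
  · rintro ⟨Λ, hΛ, hτΛ, hdΛ⟩
    have hmem : ∀ δ ∈ Λ, ∀ x : X, (fun y => δ y x) ∈ Lip1 τ d := by
      intro δ hδ x
      obtain ⟨hpos, hrefl, hsymm, htri, C, hC⟩ := hΛ δ hδ
      refine ⟨?_, ⟨C, fun y => ?_⟩, fun y z => ?_⟩
      · refine continuous_iff_le_induced.mpr ?_
        exact hτΛ.le.trans (iInf₂_le_of_le δ hδ (iInf_le _ x))
      · rw [abs_of_nonneg (hpos y x)]; exact hC y x
      · have h1 : |δ y x - δ z x| ≤ δ y z := by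
          rw [abs_sub_le_iff]
          exact ⟨by linarith [htri y x z, hsymm z x],
            by linarith [htri z x y, hsymm z y, hsymm x y]⟩
        calc ENNReal.ofReal |δ y x - δ z x| ≤ ENNReal.ofReal (δ y z) :=
              ENNReal.ofReal_le_ofReal h1
          _ ≤ ⨆ δ' ∈ Λ, ENNReal.ofReal (δ' y z) := le_iSup₂_of_le δ hδ le_rfl
          _ = d y z := (hdΛ y z).symm
    refine ⟨hd, ?_, ?_⟩
    · apply le_antisymm
      · refine le_iInf₂ fun f hf => continuous_iff_le_induced.mp hf.1
      · conv_rhs => rw [hτΛ]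
        refine le_iInf₂ fun δ hδ => le_iInf fun x => ?_
        exact iInf₂_le_of_le (fun y => δ y x) (hmem δ hδ x) le_rfl
    · intro x y
      apply le_antisymm
      · rw [hdΛ x y]
        refine iSup₂_le fun δ hδ => ?_
        obtain ⟨hpos, hrefl, hsymm, htri, C, hC⟩ := hΛ δ hδ
        refine le_iSup₂_of_le (fun z => δ z y) (hmem δ hδ y) ?_
        have heq : |(fun z => δ z y) x - (fun z => δ z y) y| = δ x y := by
          simp [hrefl y, abs_of_nonneg (hpos x y)]
        rw [heq]
      · exact iSup₂_le fun f hf => hf.2.2 x y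
end

section
/- Let (X,τ,d) be a pre-e.m.t. space such that (X,τ) is Hausdorff. Then (X,τ,d) is an extended metric-topological space if and only if there exist a compact extended metric-topological space (K,σ,ρ) and a map ι : X → K that is a homeomorphism of (X,τ) onto its image ι(X) (with the relative topology of σ) and is distance preserving, i.e. ρ(ι(x),ι(y)) = d(x,y) for all x,y ∈ X. -/
open scoped ENNReal

universe u v w

/-!
An e.m.t. space `(X, τ, d)` maps into `ℝ ^ LIP_{b,1}(X)` by `x ↦ (f x)_f`. Since `τ` is the initial
topology of `LIP_{b,1}(X)` this map is an embedding, and since `d` is recovered from `LIP_{b,1}(X)`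
it carries `d` to the supremum distance of the coordinates. Each coordinate is bounded, so the
closure `K` of the image is compact, and `K` with the supremum distance is again e.m.t.: its
coordinate projections already lie in `LIP_{b,1}(K)` and generate both its topology and its
distance. Conversely, a distance-preserving topological embedding `ι : X → K` into an e.m.t. space
makes `X` e.m.t., because the functions `g ∘ ι`, `g ∈ LIP_{b,1}(K)`, lie in `LIP_{b,1}(X)` and
generate `τ` and `d`.
-/

open Set Function Topology TopologicalSpace

theorem IsExtDist.comap {X Y : Type*} {ρ : Y → Y → ℝ≥0∞} (hρ : IsExtDist ρ) {φ : X → Y}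
    (hφ : Injective φ) : IsExtDist fun x y => ρ (φ x) (φ y) where
  eq_zero_iff _ _ := (hρ.eq_zero_iff _ _).trans hφ.eq_iff
  symm _ _ := hρ.symm _ _
  triangle _ _ _ := hρ.triangle _ _ _

section Lip1

variable {X Y : Type*} {τ : TopologicalSpace X} {d : X → X → ℝ≥0∞}

theorem Lip1.comp {σ : TopologicalSpace Y} {ρ : Y → Y → ℝ≥0∞} {g : Y → ℝ} (hg : g ∈ Lip1 σ ρ)
    {φ : X → Y} (hφ : ContinuousShort τ d σ ρ φ) : g ∘ φ ∈ Lip1 τ d := by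
  obtain ⟨hgc, ⟨C, hC⟩, hgρ⟩ := hg
  exact ⟨hgc.comp hφ.1, ⟨C, fun x => hC (φ x)⟩, fun x y => (hgρ _ _).trans (hφ.2 x y)⟩

theorem le_iInf_lip1_induced :
    τ ≤ ⨅ f ∈ Lip1 τ d, TopologicalSpace.induced f inferInstance :=
  le_iInf₂ fun _ hf => continuous_iff_le_induced.1 hf.1

theorem iSup_lip1_le (x y : X) : ⨆ f ∈ Lip1 τ d, ENNReal.ofReal |f x - f y| ≤ d x y :=
  iSup₂_le fun _ hf => hf.2.2 x y

theorem IsEMT.of_lip1_family {I : Type*} (hd : IsExtDist d) (g : I → X → ℝ)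
    (hg : ∀ i, g i ∈ Lip1 τ d) (hτ : τ = ⨅ i, TopologicalSpace.induced (g i) inferInstance)
    (hdg : ∀ x y, d x y ≤ ⨆ i, ENNReal.ofReal |g i x - g i y|) : IsEMT τ d := by
  refine ⟨hd, le_antisymm le_iInf_lip1_induced ?_, fun x y => le_antisymm ?_ (iSup_lip1_le x y)⟩
  · exact (le_iInf fun i => iInf₂_le (g i) (hg i)).trans hτ.ge
  · exact (hdg x y).trans (iSup_le fun i => le_iSup₂_of_le (g i) (hg i) le_rfl)

theorem IsEMT.comap {σ : TopologicalSpace Y} {ρ : Y → Y → ℝ≥0∞} (hY : IsEMT σ ρ) {ι : X → Y}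
    (hι : @IsEmbedding X Y τ σ ι) (hιρ : ∀ x y, ρ (ι x) (ι y) = d x y) : IsEMT τ d := by
  obtain ⟨hρ, hσ, hρrec⟩ := hY
  have hd : IsExtDist d := by
    simpa only [hιρ] using hρ.comap hι.injective
  refine IsEMT.of_lip1_family hd (fun g : Lip1 σ ρ => g.1 ∘ ι)
    (fun g => Lip1.comp g.2 ⟨hι.continuous, fun x y => (hιρ x y).le⟩) ?_ fun x y => ?_
  · rw [hι.eq_induced]
    conv_lhs => rw [hσ]
    rw [iInf_subtype', induced_iInf]
    simp only [induced_compose]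
  · rw [← hιρ, hρrec, iSup_subtype']
    rfl

end Lip1

-- Mathlib's `edist` on `I → ℝ` is only available for finite `I`.
noncomputable def supEDist {I : Type*} (p q : I → ℝ) : ℝ≥0∞ :=
  ⨆ i, ENNReal.ofReal |p i - q i|

theorem supEDist_eq_iSup_edist {I : Type*} (p q : I → ℝ) :
    supEDist p q = ⨆ i, edist (p i) (q i) := by
  simp only [supEDist, edist_dist, Real.dist_eq]

theorem isExtDist_supEDist {I : Type*} : IsExtDist (supEDist (I := I)) := by
  refine ⟨fun p q => ?_, fun p q => ?_, fun p q r => ?_⟩ <;> simp only [supEDist_eq_iSup_edist]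
  · simp only [ENNReal.iSup_eq_zero, edist_eq_zero, funext_iff]
  · simp only [edist_comm]
  · exact iSup_le fun i => (edist_triangle _ (r i) _).trans
      (add_le_add (le_iSup_of_le i le_rfl) (le_iSup_of_le i le_rfl))

theorem isEMT_supEDist_of_isCompact {I : Type*} {S : Set (I → ℝ)} (hS : IsCompact S) :
    IsEMT (inferInstance : TopologicalSpace S) fun p q : S => supEDist p.1 q.1 := by
  refine IsEMT.of_lip1_family (isExtDist_supEDist.comap Subtype.val_injective)
    (fun i (p : S) => p.1 i) (fun i => ⟨?_, ?_, fun p q => ?_⟩) (induced_to_pi _) fun p q => le_rfl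
  · exact (continuous_apply i).comp continuous_subtype_val
  · obtain ⟨C, hC⟩ := hS.exists_bound_of_continuousOn (continuous_apply i).continuousOn
    exact ⟨C, fun p => hC p.1 p.2⟩
  · exact le_iSup (fun i => ENNReal.ofReal |p.1 i - q.1 i|) i

theorem isCompact_closure_range_pi_of_isBounded {X I : Type*} (g : I → X → ℝ)
    (hg : ∀ i, Bornology.IsBounded (range (g i))) :
    IsCompact (closure (range fun x i => g i x)) :=
  (isCompact_univ_pi fun i => (hg i).isCompact_closure).closure_of_subset <| by
    rintro _ ⟨x, rfl⟩ i -
    exact subset_closure (mem_range_self x)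

def lipEval {X : Type*} (τ : TopologicalSpace X) (d : X → X → ℝ≥0∞) : X → Lip1 τ d → ℝ :=
  fun x f => f.1 x

section lipEval

variable {X : Type*} {τ : TopologicalSpace X} {d : X → X → ℝ≥0∞}

theorem isCompact_closure_range_lipEval : IsCompact (closure (range (lipEval τ d))) :=
  isCompact_closure_range_pi_of_isBounded (fun f : Lip1 τ d => f.1) fun f => by
    obtain ⟨C, hC⟩ := f.2.2.1
    exact isBounded_iff_forall_norm_le.2 ⟨C, forall_mem_range.2 hC⟩

theorem supEDist_lipEval (hrec : ∀ x y, d x y = ⨆ f ∈ Lip1 τ d, ENNReal.ofReal |f x - f y|)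
    (x y : X) : supEDist (lipEval τ d x) (lipEval τ d y) = d x y := by
  rw [hrec, iSup_subtype']
  rfl

theorem IsEMT.isEmbedding_lipEval (h : IsEMT τ d) : @IsEmbedding X _ τ _ (lipEval τ d) := by
  obtain ⟨hd, hτ, hrec⟩ := h
  refine @IsEmbedding.mk X _ τ _ _ ⟨?_⟩ fun x y hxy => ?_
  · unfold lipEval
    rw [induced_to_pi]
    conv_lhs => rw [hτ]
    rw [iInf_subtype']
  · rw [← hd.eq_zero_iff, ← supEDist_lipEval hrec, hxy]
    exact (isExtDist_supEDist.eq_zero_iff _ _).2 rfl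

end lipEval

theorem isEMT_iff_embeds_in_compact_general {X : Type u} (τ : TopologicalSpace X)
    (d : X → X → ℝ≥0∞) :
    IsEMT τ d ↔
      ∃ (K : Type u) (σ : TopologicalSpace K) (ρ : K → K → ℝ≥0∞) (ι : X → K),
        IsEMT σ ρ ∧ @CompactSpace K σ ∧
        @Topology.IsEmbedding X K τ σ ι ∧ (∀ x y : X, ρ (ι x) (ι y) = d x y) := by
  refine ⟨fun h => ?_, fun ⟨K, σ, ρ, ι, hK, _, hι, hιρ⟩ => hK.comap hι hιρ⟩
  have hS := isCompact_closure_range_lipEval (τ := τ) (d := d)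
  exact ⟨_, inferInstance, fun p q => supEDist p.1 q.1,
    codRestrict (lipEval τ d) _ fun x => subset_closure (mem_range_self x),
    isEMT_supEDist_of_isCompact hS, isCompact_iff_compactSpace.1 hS,
    h.isEmbedding_lipEval.codRestrict _ _, supEDist_lipEval h.2.2⟩

/-- Let `(X,τ,d)` be a pre-e.m.t. space with `(X,τ)` Hausdorff. Then `(X,τ,d)` is an e.m.t.
space if and only if there exist a compact e.m.t. space `(K,σ,ρ)` and a map `ι : X → K`
which is a topological embedding (a homeomorphism onto its image) and is distance
preserving. -/
theorem isEMT_iff_embeds_in_compact {X : Type u} (τ : TopologicalSpace X)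
    (d : X → X → ℝ≥0∞) (hd : IsExtDist d) (hT2 : @T2Space X τ) :
    IsEMT τ d ↔
      ∃ (K : Type u) (σ : TopologicalSpace K) (ρ : K → K → ℝ≥0∞) (ι : X → K),
        IsEMT σ ρ ∧ @CompactSpace K σ ∧
        @Topology.IsEmbedding X K τ σ ι ∧ (∀ x y : X, ρ (ι x) (ι y) = d x y) :=
  isEMT_iff_embeds_in_compact_general τ d
end

section
/- Let (X,τ,d) be an extended metric-topological space. Let LIP_b(X,τ,d) be the normed algebra of bounded τ-continuous d-Lipschitz real functions on X with the supremum norm, let X̂ be its set of characters (nonzero bounded multiplicative linear functionals), endowed with the weak* topology τ̂ and with the extended distance d̂(θ,σ) := sup{|θ(f)−σ(f)| : f ∈ LIP_{b,1}(X,τ,d)}, and let ι̂ : X → X̂ be the evaluation map ι̂(x)(f) = f(x). Assume that ι̂(X) is weak*-dense in X̂. Then for every compact extended metric-topological space (Y,τ_Y,d_Y) and every continuous-short map φ : (X,τ,d) → (Y,τ_Y,d_Y) there exists a unique map φ̂ : X̂ → Y that is continuous from τ̂ to τ_Y, satisfies d_Y(φ̂(θ),φ̂(σ)) ≤ d̂(θ,σ)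 for all θ,σ ∈ X̂, and satisfies φ̂ ∘ ι̂ = φ. -/
open scoped ENNReal

universe u v w

/-- `LIP_b(X,τ,d)`: bounded `τ`-continuous `d`-Lipschitz functions `f : X → ℝ`. -/
def LipB {X : Type*} (τ : TopologicalSpace X) (d : X → X → ℝ≥0∞) : Set (X → ℝ) :=
  {f | @Continuous X ℝ τ _ f ∧ (∃ C : ℝ, ∀ x, |f x| ≤ C) ∧
    ∃ L : ℝ, 0 ≤ L ∧ ∀ x y, ENNReal.ofReal |f x - f y| ≤ ENNReal.ofReal L * d x y}

/-- A character of the normed algebra `LIP_b(X,τ,d)` (with the supremum norm): a nonzero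
norm-bounded linear multiplicative functional. -/
def IsCharacter {X : Type*} (τ : TopologicalSpace X) (d : X → X → ℝ≥0∞)
    (θ : LipB τ d → ℝ) : Prop :=
  (∀ f g h : LipB τ d, (h : X → ℝ) = (f : X → ℝ) + (g : X → ℝ) → θ h = θ f + θ g) ∧
  (∀ (c : ℝ) (f h : LipB τ d), (h : X → ℝ) = c • (f : X → ℝ) → θ h = c * θ f) ∧
  (∀ f g h : LipB τ d, (h : X → ℝ) = (f : X → ℝ) * (g : X → ℝ) → θ h = θ f * θ g) ∧
  (∃ C : ℝ, ∀ f : LipB τ d, |θ f| ≤ C * (⨆ x, |(f : X → ℝ) x|)) ∧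
  (∃ f : LipB τ d, θ f ≠ 0)

/-- The Gelfand compactification `X̂`: the set of characters of `LIP_b(X,τ,d)`. -/
def Ghat {X : Type*} (τ : TopologicalSpace X) (d : X → X → ℝ≥0∞) : Type _ :=
  {θ : LipB τ d → ℝ // IsCharacter τ d θ}

/-- The weak* topology `τ̂` on `X̂` (the topology of pointwise convergence of functionals). -/
def GhatTop {X : Type*} (τ : TopologicalSpace X) (d : X → X → ℝ≥0∞) :
    TopologicalSpace (Ghat τ d) :=
  TopologicalSpace.induced (Subtype.val : Ghat τ d → (LipB τ d → ℝ)) Pi.topologicalSpace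

/-- The extended distance `d̂(θ,σ) = sup {|θ f - σ f| : f ∈ LIP_{b,1}(X,τ,d)}` on `X̂`. -/
noncomputable def GhatDist {X : Type*} (τ : TopologicalSpace X) (d : X → X → ℝ≥0∞)
    (θ σ : Ghat τ d) : ℝ≥0∞ :=
  ⨆ (f : LipB τ d) (_ : (f : X → ℝ) ∈ Lip1 τ d), ENNReal.ofReal |θ.1 f - σ.1 f|

/-!
Evaluating `Y` against `LIP_{b,1}(Y)` gives a continuous map `E : Y → ℝ^{LIP_{b,1}(Y)}`, injective
because `d_Y` is recovered by these functions, hence a closed embedding as `Y` is compact. A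
character `θ` defines the point `(θ (g ∘ φ))_g`, which depends continuously on `θ` and equals
`E (φ x)` at `θ = ι̂ x`; since `E(Y)` is closed and `ι̂(X)` is dense it lies in `E(Y)` for every `θ`,
and `φ̂ θ` is its preimage. Shortness holds because `g ∘ φ ∈ LIP_{b,1}(X)`, and uniqueness because
`Y` is Hausdorff.
-/

open Function Set Topology

theorem Topology.IsClosedEmbedding.exists_continuous_comp_eq_of_dense
    {A Y Z : Type*} [TopologicalSpace A] [TopologicalSpace Y] [TopologicalSpace Z]
    {E : Y → Z} (hE : IsClosedEmbedding E) {Θ : A → Z} (hΘ : Continuous Θ) {s : Set A}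
    (hs : Dense s) (hsΘ : MapsTo Θ s (range E)) :
    ∃ ψ : A → Y, Continuous ψ ∧ E ∘ ψ = Θ := by
  have hrange : ∀ a, Θ a ∈ range E := fun a =>
    (hE.isClosed_range.preimage hΘ).closure_subset_iff.mpr hsΘ (hs a)
  choose ψ hψ using hrange
  have hEψ : E ∘ ψ = Θ := funext hψ
  exact ⟨ψ, hE.isInducing.continuous_iff.mpr (hEψ ▸ hΘ), hEψ⟩

section Lip1

variable {X Y : Type*} {τ : TopologicalSpace X} {d : X → X → ℝ≥0∞}

theorem lipB_of_mem_lip1 {f : X → ℝ} (hf : f ∈ Lip1 τ d) : f ∈ LipB τ d := by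
  refine ⟨hf.1, hf.2.1, 1, zero_le_one, fun x y => ?_⟩
  rw [ENNReal.ofReal_one, one_mul]
  exact hf.2.2 x y

theorem lip1_comp_continuousShort {τY : TopologicalSpace Y} {dY : Y → Y → ℝ≥0∞} {φ : X → Y}
    (hφ : ContinuousShort τ d τY dY φ) {g : Y → ℝ} (hg : g ∈ Lip1 τY dY) :
    g ∘ φ ∈ Lip1 τ d := by
  obtain ⟨hg_cont, ⟨C, hC⟩, hg_short⟩ := hg
  exact ⟨hg_cont.comp hφ.1, ⟨C, fun x => hC (φ x)⟩,
    fun x y => (hg_short (φ x) (φ y)).trans (hφ.2 x y)⟩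

end Lip1

section Evaluation

variable {X Y : Type*} [τY : TopologicalSpace Y] {dY : Y → Y → ℝ≥0∞}

variable (τY dY) in
def lip1Eval (y : Y) : Lip1 τY dY → ℝ := fun g => g.1 y

theorem continuous_lip1Eval : Continuous (lip1Eval τY dY) :=
  continuous_pi fun g => g.2.1

theorem injective_lip1Eval (hdist : IsExtDist dY)
    (hrec : ∀ x y, dY x y = ⨆ f ∈ Lip1 τY dY, ENNReal.ofReal |f x - f y|) :
    Injective (lip1Eval τY dY) := by
  intro y y' hyy'
  refine (hdist.eq_zero_iff y y').mp (le_antisymm ?_ zero_le)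
  rw [hrec]
  refine iSup₂_le fun g hg => ?_
  simp [show g y = g y' from congrFun hyy' ⟨g, hg⟩]

variable {τ : TopologicalSpace X} {d : X → X → ℝ≥0∞} {φ : X → Y}

def ghatPullback (hφ : ContinuousShort τ d τY dY φ) (θ : Ghat τ d) : Lip1 τY dY → ℝ :=
  fun g => θ.1 ⟨g.1 ∘ φ, lipB_of_mem_lip1 (lip1_comp_continuousShort hφ g.2)⟩

theorem continuous_ghatPullback (hφ : ContinuousShort τ d τY dY φ) :
    @Continuous _ _ (GhatTop τ d) _ (ghatPullback hφ) := by
  let := GhatTop τ d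
  exact continuous_pi fun _ => (continuous_apply _).comp continuous_induced_dom

theorem ghatPullback_eval {ι : X → Ghat τ d}
    (hι : ∀ (x : X) (f : LipB τ d), (ι x).1 f = (f : X → ℝ) x)
    (hφ : ContinuousShort τ d τY dY φ) (x : X) :
    ghatPullback hφ (ι x) = lip1Eval τY dY (φ x) :=
  funext fun _ => hι x _

theorem le_ghatDist_of_lip1Eval_eq
    (hrec : ∀ x y, dY x y = ⨆ f ∈ Lip1 τY dY, ENNReal.ofReal |f x - f y|)
    (hφ : ContinuousShort τ d τY dY φ) {y y' : Y} {θ σ : Ghat τ d}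
    (hy : lip1Eval τY dY y = ghatPullback hφ θ) (hy' : lip1Eval τY dY y' = ghatPullback hφ σ) :
    dY y y' ≤ GhatDist τ d θ σ := by
  rw [hrec]
  refine iSup₂_le fun g hg => ?_
  rw [show g y = _ from congrFun hy ⟨g, hg⟩, show g y' = _ from congrFun hy' ⟨g, hg⟩]
  exact le_iSup₂ (f := fun (f : LipB τ d) (_ : (f : X → ℝ) ∈ Lip1 τ d) =>
    ENNReal.ofReal |θ.1 f - σ.1 f|) _ (lip1_comp_continuousShort hφ hg)

end Evaluation

theorem gelfand_universal_property_general {X : Type u} (τ : TopologicalSpace X)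
    (d : X → X → ℝ≥0∞)
    (ι : X → Ghat τ d) (hι : ∀ (x : X) (f : LipB τ d), (ι x).1 f = (f : X → ℝ) x)
    (hdense : @Dense (Ghat τ d) (GhatTop τ d) (Set.range ι)) :
    ∀ (Y : Type v) (τY : TopologicalSpace Y) (dY : Y → Y → ℝ≥0∞),
      IsEMT τY dY → @CompactSpace Y τY →
      ∀ φ : X → Y, ContinuousShort τ d τY dY φ →
        ∃! ψ : Ghat τ d → Y,
          (@Continuous (Ghat τ d) Y (GhatTop τ d) τY ψ ∧
            ∀ θ σ : Ghat τ d, dY (ψ θ) (ψ σ) ≤ GhatDist τ d θ σ) ∧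
          ψ ∘ ι = φ := by
  intro Y τY dY hY _ φ hφ
  let _ : TopologicalSpace (Ghat τ d) := GhatTop τ d
  have hE : IsClosedEmbedding (lip1Eval τY dY) :=
    continuous_lip1Eval.isClosedEmbedding (injective_lip1Eval hY.1 hY.2.2)
  have : T2Space Y := hE.isEmbedding.t2Space
  obtain ⟨ψ, hψ_cont, hEψ⟩ := hE.exists_continuous_comp_eq_of_dense
    (continuous_ghatPullback hφ) hdense (by
      rintro _ ⟨x, rfl⟩
      exact ⟨φ x, (ghatPullback_eval hι hφ x).symm⟩)
  have hψι : ψ ∘ ι = φ :=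
    funext fun x => hE.injective ((congrFun hEψ (ι x)).trans (ghatPullback_eval hι hφ x))
  refine ⟨ψ, ⟨⟨hψ_cont, fun θ σ =>
    le_ghatDist_of_lip1Eval_eq hY.2.2 hφ (congrFun hEψ θ) (congrFun hEψ σ)⟩, hψι⟩, ?_⟩
  rintro ψ' ⟨⟨hψ'_cont, -⟩, hψ'ι⟩
  refine Continuous.ext_on hdense hψ'_cont hψ_cont ?_
  rintro _ ⟨x, rfl⟩
  exact (congrFun hψ'ι x).trans (congrFun hψι x).symm

/-- **Universal property of the Gelfand compactification.** Let `(X,τ,d)` be an e.m.t.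
space, let `ι̂ : X → X̂` be the evaluation map into the character space of `LIP_b(X,τ,d)`,
and assume `ι̂(X)` is weak*-dense in `X̂`. Then every continuous-short map `φ` from `(X,τ,d)`
into a compact e.m.t. space `(Y,τ_Y,d_Y)` extends uniquely to a map `φ̂ : X̂ → Y` that is
continuous from `τ̂` to `τ_Y`, short from `d̂` to `d_Y`, and satisfies `φ̂ ∘ ι̂ = φ`. -/
theorem gelfand_universal_property {X : Type u} (τ : TopologicalSpace X)
    (d : X → X → ℝ≥0∞) (h : IsEMT τ d)
    (ι : X → Ghat τ d) (hι : ∀ (x : X) (f : LipB τ d), (ι x).1 f = (f : X → ℝ) x)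
    (hdense : @Dense (Ghat τ d) (GhatTop τ d) (Set.range ι)) :
    ∀ (Y : Type v) (τY : TopologicalSpace Y) (dY : Y → Y → ℝ≥0∞),
      IsEMT τY dY → @CompactSpace Y τY →
      ∀ φ : X → Y, ContinuousShort τ d τY dY φ →
        ∃! ψ : Ghat τ d → Y,
          (@Continuous (Ghat τ d) Y (GhatTop τ d) τY ψ ∧
            ∀ θ σ : Ghat τ d, dY (ψ θ) (ψ σ) ≤ GhatDist τ d θ σ) ∧
          ψ ∘ ι = φ :=
  gelfand_universal_property_general τ d ι hι hdense
end

section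
/- Let (X,τ) be a topological space and let λ ∈ (0,∞]. Define the λ-discrete extended distance on X by d^X_{λ-discr}(x,y) = 0 if x = y and d^X_{λ-discr}(x,y) = λ if x ≠ y. Then (X,τ,d^X_{λ-discr}) is an extended metric-topological space if and only if (X,τ) is a Tychonoff space (i.e. completely regular and Hausdorff). -/
open scoped ENNReal

universe u v w

open scoped Classical

/-!
An e.m.t. topology is the initial topology of a family of real functions, hence completely
regular, and recovering a distance that is positive off the diagonal yields continuous functions
separating points, hence Hausdorff. Conversely, in a Tychonoff space every `c • g` with
`g : X → [0, 1]` continuous and `0 ≤ c ≤ λ` is `1`-Lipschitz for the `λ`-discrete distance; these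
functions generate the topology (Urysohn functions for points and closed sets) and, taking `g`
separating `x` from `{y}`, realise `λ` as the supremum defining the recovered distance.
-/

open Topology unitInterval

section

variable {X : Type*} [τ : TopologicalSpace X]

theorem completelyRegularSpace_of_eq_iInf_induced {S : Set (X → ℝ)}
    (h : τ = ⨅ f ∈ S, TopologicalSpace.induced f inferInstance) :
    CompletelyRegularSpace X := by
  rw [h, iInf_subtype']
  exact completelyRegularSpace_iInf fun f =>
    completelyRegularSpace_induced (inferInstance : CompletelyRegularSpace ℝ) (f : X → ℝ)

theorem exists_mem_lip1_ne_of_eq_iSup {d : X → X → ℝ≥0∞} {x y : X}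
    (hrec : d x y = ⨆ f ∈ Lip1 τ d, ENNReal.ofReal |f x - f y|) (hxy : d x y ≠ 0) :
    ∃ f ∈ Lip1 τ d, f x ≠ f y := by
  by_contra! h
  refine hxy (hrec.trans (ENNReal.iSup_eq_zero.mpr fun f =>
    ENNReal.iSup_eq_zero.mpr fun hf => ?_))
  simp [h f hf]

theorem t2Space_of_eq_iSup_lip1 {d : X → X → ℝ≥0∞} (hd : IsExtDist d)
    (hrec : ∀ x y, d x y = ⨆ f ∈ Lip1 τ d, ENNReal.ofReal |f x - f y|) : T2Space X where
  t2 x y hxy := by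
    obtain ⟨f, hf, hne⟩ :=
      exists_mem_lip1_ne_of_eq_iSup (hrec x y) ((hd.eq_zero_iff x y).not.mpr hxy)
    exact separated_by_continuous hf.1 hne

theorem eq_iInf_induced_of_completelyRegularSpace [CompletelyRegularSpace X]
    {S : Set (X → ℝ)} (hS : ∀ f ∈ S, Continuous f) {c : ℝ} (hc : 0 < c)
    (hmul : ∀ g : X → I, Continuous g → (fun z => c * g z) ∈ S) :
    τ = ⨅ f ∈ S, TopologicalSpace.induced f inferInstance := by
  refine le_antisymm (le_iInf₂ fun f hf => (hS f hf).le_induced) ?_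
  refine TopologicalSpace.le_def.mpr fun U hU =>
    (@isOpen_iff_forall_mem_open X (⨅ f ∈ S, .induced f inferInstance) U).mpr fun x hx => ?_
  obtain ⟨g, hg, hgx, hgU⟩ := CompletelyRegularSpace.completely_regular_isOpen x U hU hx
  refine ⟨(fun z => c * g z) ⁻¹' Set.Iio c, fun z hz => ?_, ?_, by simp [hgx, hc]⟩
  · by_contra hzU
    simp [hgU hzU] at hz
  · exact TopologicalSpace.le_def.mp (iInf₂_le _ (hmul g hg)) _ (isOpen_induced isOpen_Iio)

end

noncomputable def discreteDist {X : Type*} (lam : ℝ≥0∞) (x y : X) : ℝ≥0∞ :=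
  if x = y then 0 else lam

theorem isExtDist_discreteDist {X : Type*} {lam : ℝ≥0∞} (hlam : lam ≠ 0) :
    IsExtDist (discreteDist (X := X) lam) where
  eq_zero_iff x y := by by_cases h : x = y <;> simp [discreteDist, h, hlam]
  symm x y := by simp only [discreteDist, eq_comm]
  triangle x y z := by unfold discreteDist; split_ifs <;> simp_all

section

variable {X : Type*} [τ : TopologicalSpace X] {lam : ℝ≥0∞}

theorem mul_mem_lip1_discreteDist {g : X → I} (hg : Continuous g) {c : ℝ} (hc : 0 ≤ c)
    (hcl : ENNReal.ofReal c ≤ lam) : (fun z => c * g z) ∈ Lip1 τ (discreteDist lam) := by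
  refine ⟨continuous_const.mul (continuous_subtype_val.comp hg), ⟨c, fun z => ?_⟩, fun a b => ?_⟩
  · rw [abs_mul, abs_of_nonneg hc, abs_of_nonneg (nonneg (g z))]
    exact mul_le_of_le_one_right hc (le_one (g z))
  · by_cases hab : a = b
    · simp [hab]
    rw [discreteDist, if_neg hab, ← mul_sub, abs_mul, abs_of_nonneg hc]
    refine le_trans (ENNReal.ofReal_le_ofReal (mul_le_of_le_one_right hc ?_)) hcl
    exact abs_sub_le_iff.mpr ⟨by linarith [le_one (g a), nonneg (g b)],
      by linarith [le_one (g b), nonneg (g a)]⟩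

theorem discreteDist_eq_iSup_lip1 [CompletelyRegularSpace X] [T1Space X] (x y : X) :
    discreteDist lam x y = ⨆ f ∈ Lip1 τ (discreteDist lam), ENNReal.ofReal |f x - f y| := by
  by_cases hxy : x = y
  · simp only [discreteDist, hxy, if_true, sub_self, abs_zero, ENNReal.ofReal_zero,
      ENNReal.iSup_zero]
  refine le_antisymm ?_ (iSup₂_le fun f hf => hf.2.2 x y)
  obtain ⟨g, hg, hgx, hgy⟩ :=
    CompletelyRegularSpace.completely_regular x {y} isClosed_singleton hxy
  refine ENNReal.le_of_forall_nnreal_lt fun r hr => ?_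
  rw [discreteDist, if_neg hxy] at hr
  have hmem := mul_mem_lip1_discreteDist hg r.coe_nonneg (by simpa using hr.le)
  refine le_trans ?_ (le_iSup₂_of_le _ hmem le_rfl)
  simp [hgx, hgy rfl]

theorem isEMT_discreteDist [CompletelyRegularSpace X] [T1Space X] (hlam : 0 < lam) :
    IsEMT τ (discreteDist lam) := by
  obtain ⟨c, hc, hcl⟩ := ENNReal.lt_iff_exists_nnreal_btwn.mp hlam
  refine ⟨isExtDist_discreteDist hlam.ne', ?_, discreteDist_eq_iSup_lip1⟩
  exact eq_iInf_induced_of_completelyRegularSpace (fun f hf => hf.1) (mod_cast hc)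
    fun g hg => mul_mem_lip1_discreteDist hg c.coe_nonneg (by simpa using hcl.le)

end

/-- Let `(X,τ)` be a topological space and `λ ∈ (0,∞]`. The triple `(X, τ, d^X_{λ-discr})`,
where `d^X_{λ-discr}` is the `λ`-discrete extended distance, is an e.m.t. space if and only
if `(X,τ)` is a Tychonoff space (completely regular and Hausdorff). -/
theorem isEMT_discrete_iff_tychonoff {X : Type u} (τ : TopologicalSpace X)
    (lam : ℝ≥0∞) (hlam : 0 < lam) :
    IsEMT τ (fun x y : X => if x = y then 0 else lam) ↔
      (@CompletelyRegularSpace X τ ∧ @T2Space X τ) := by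
  change IsEMT τ (discreteDist lam) ↔ _
  exact ⟨fun ⟨hd, htop, hrec⟩ =>
      ⟨completelyRegularSpace_of_eq_iInf_induced htop, t2Space_of_eq_iSup_lip1 hd hrec⟩,
    fun ⟨_, _⟩ => isEMT_discreteDist hlam⟩
end
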